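/- arXiv:1407.1377 — 6 statements merged into one kernel-verified Lean document; each statement's English description precedes it below -/
import Mathlib

section
/- Let L be the irreducible Laplacian of a strongly connected weighted digraph with positive left null vector ξ (ξᵀL = 0, ∑ξᵢ = 1) and Ξ = diag(ξ). Then the symmetric matrix ΞL + LᵀΞ has all row sums equal to zero, has nonpositive eigenvalues, and zero is an eigenvalue of algebraic multiplicity one. -/
open Matrix

/-- Edge relation of a weighted digraph: `edge A j i` means there is a
directed link from agent `j` to agent `i`, i.e. `A i j > 0`. -/
def edge {m : ℕ} (A : Matrix (Fin m) (Fin m) ℝ) (j i : Fin m) : Prop :=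
  0 < A i j

/-- `G` is strongly connected. -/
def StronglyConnected {m : ℕ} (A : Matrix (Fin m) (Fin m) ℝ) : Prop :=
  ∀ i j : Fin m, Relation.ReflTransGen (edge A) i j

/-!
The identity `ξᵀ L = 0` says that the column sums of `A` weighted by `ξ` are `ξᵢ dᵢ`, which makes
`-(Ξ L + Lᵀ Ξ)` exactly the Laplacian of the symmetric nonnegative weights `w = Ξ A + Aᵀ Ξ`; these
weights inherit the connectivity of `A`. The quadratic form of a Laplacian is
`½ ∑ᵢⱼ wᵢⱼ (xᵢ - xⱼ)²`, so it is positive semidefinite and its kernel consists of the vectors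
that are constant along edges, hence constant. For a symmetric matrix the algebraic multiplicity
of the eigenvalue `0` is the dimension of the kernel.
-/

def laplacian {ι R : Type*} [Fintype ι] [DecidableEq ι] [AddCommGroup R] (w : Matrix ι ι R) :
    Matrix ι ι R :=
  diagonal (fun i => ∑ j, w i j) - w

section
variable {ι R : Type*} [Fintype ι] [DecidableEq ι]

theorem sum_laplacian_apply [AddCommGroup R] (w : Matrix ι ι R) (i : ι) :
    ∑ j, laplacian w i j = 0 := by
  simp [laplacian, Matrix.sub_apply, diagonal_apply]

theorem isSymm_laplacian [AddCommGroup R] {w : Matrix ι ι R} (hw : w.IsSymm) :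
    (laplacian w).IsSymm :=
  (isSymm_diagonal _).sub hw

theorem two_mul_dotProduct_laplacian_mulVec [CommRing R] {w : Matrix ι ι R} (hw : w.IsSymm)
    (x : ι → R) :
    2 * (x ⬝ᵥ laplacian w *ᵥ x) = ∑ i, ∑ j, w i j * (x i - x j) ^ 2 := by
  have hswap : ∑ i, ∑ j, w i j * x j ^ 2 = ∑ i, ∑ j, w i j * x i ^ 2 := by
    rw [Finset.sum_comm]; simp_rw [hw.apply]
  have hquad : x ⬝ᵥ laplacian w *ᵥ x
      = ∑ i, ∑ j, w i j * x i ^ 2 - ∑ i, ∑ j, w i j * (x i * x j) := by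
    rw [laplacian, sub_mulVec, dotProduct_sub]
    congr 1
    · simp only [dotProduct, mulVec_diagonal, Finset.sum_mul, Finset.mul_sum]
      exact Finset.sum_congr rfl fun i _ => Finset.sum_congr rfl fun j _ => by ring
    · simp only [dotProduct, mulVec, Finset.mul_sum]
      exact Finset.sum_congr rfl fun i _ => Finset.sum_congr rfl fun j _ => by ring
  calc 2 * (x ⬝ᵥ laplacian w *ᵥ x)
      = ∑ i, ∑ j, w i j * x i ^ 2 - 2 * ∑ i, ∑ j, w i j * (x i * x j)
        + ∑ i, ∑ j, w i j * x j ^ 2 := by rw [hquad, hswap]; ring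
    _ = ∑ i, ∑ j, w i j * (x i - x j) ^ 2 := by
      simp only [Finset.mul_sum, ← Finset.sum_sub_distrib, ← Finset.sum_add_distrib]
      refine Finset.sum_congr rfl fun i _ => Finset.sum_congr rfl fun j _ => by ring

theorem posSemidef_laplacian {w : Matrix ι ι ℝ} (hw : w.IsSymm) (hw₀ : ∀ i j, 0 ≤ w i j) :
    (laplacian w).PosSemidef := by
  refine .of_dotProduct_mulVec_nonneg (isHermitian_iff_isSymm.mpr (isSymm_laplacian hw))
    fun x => ?_
  have h := two_mul_dotProduct_laplacian_mulVec hw x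
  have : 0 ≤ ∑ i, ∑ j, w i j * (x i - x j) ^ 2 :=
    Finset.sum_nonneg fun i _ => Finset.sum_nonneg fun j _ => mul_nonneg (hw₀ i j) (sq_nonneg _)
  simp only [star_trivial]
  linarith

theorem apply_eq_of_laplacian_mulVec_eq_zero {w : Matrix ι ι ℝ} (hw : w.IsSymm)
    (hw₀ : ∀ i j, 0 ≤ w i j) {x : ι → ℝ} (hx : laplacian w *ᵥ x = 0) {i j : ι}
    (hij : 0 < w i j) : x i = x j := by
  have hterm_nonneg : ∀ i j, 0 ≤ w i j * (x i - x j) ^ 2 := fun i j =>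
    mul_nonneg (hw₀ i j) (sq_nonneg _)
  have hsum : ∑ i, ∑ j, w i j * (x i - x j) ^ 2 = 0 := by
    rw [← two_mul_dotProduct_laplacian_mulVec hw, hx, dotProduct_zero, mul_zero]
  have hterm : w i j * (x i - x j) ^ 2 = 0 := by
    rw [Fintype.sum_eq_zero_iff_of_nonneg fun i => Finset.sum_nonneg fun j _ => hterm_nonneg i j]
      at hsum
    exact congrFun ((Fintype.sum_eq_zero_iff_of_nonneg (hterm_nonneg i)).mp (congrFun hsum i)) j
  simpa [hij.ne', sub_eq_zero] using hterm

end

theorem StronglyConnected.mono {m : ℕ} {A B : Matrix (Fin m) (Fin m) ℝ}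
    (hA : StronglyConnected A) (hAB : ∀ i j, 0 < A i j → 0 < B i j) : StronglyConnected B :=
  fun i j => Relation.ReflTransGen.mono (fun a b => hAB b a) _ _ (hA i j)

theorem StronglyConnected.apply_eq_of_forall_pos {m : ℕ} {α : Type*}
    {A : Matrix (Fin m) (Fin m) ℝ} (hA : StronglyConnected A) {x : Fin m → α}
    (hx : ∀ i j, 0 < A i j → x i = x j) (i j : Fin m) : x i = x j := by
  induction hA j i with
  | refl => rfl
  | tail _ hbc ih => exact (hx _ _ hbc).trans ih

theorem laplacian_mulVec_eq_zero_iff {m : ℕ} {w : Matrix (Fin m) (Fin m) ℝ} (hw : w.IsSymm)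
    (hw₀ : ∀ i j, 0 ≤ w i j) (hconn : StronglyConnected w) {x : Fin m → ℝ} :
    laplacian w *ᵥ x = 0 ↔ ∀ i j, x i = x j := by
  refine ⟨fun hx => hconn.apply_eq_of_forall_pos fun i j =>
    apply_eq_of_laplacian_mulVec_eq_zero hw hw₀ hx, fun hx => ?_⟩
  ext i
  simp only [mulVec, dotProduct, hx _ i, ← Finset.sum_mul, sum_laplacian_apply, zero_mul,
    Pi.zero_apply]

theorem finrank_ker_toEuclideanLin_laplacian {m : ℕ} [NeZero m] {w : Matrix (Fin m) (Fin m) ℝ}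
    (hw : w.IsSymm) (hw₀ : ∀ i j, 0 ≤ w i j) (hconn : StronglyConnected w) :
    Module.finrank ℝ (LinearMap.ker (toEuclideanLin (laplacian w))) = 1 := by
  have hker : LinearMap.ker (toEuclideanLin (laplacian w)) = ℝ ∙ WithLp.toLp 2 1 := by
    ext x
    rw [LinearMap.mem_ker, Submodule.mem_span_singleton, toLpLin_apply,
      WithLp.toLp_eq_zero, laplacian_mulVec_eq_zero_iff hw hw₀ hconn]
    refine ⟨fun hx => ⟨x 0, ?_⟩, ?_⟩
    · ext i; simp [hx 0 i]
    · rintro ⟨a, rfl⟩ i j; simp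
  rw [hker, finrank_span_singleton]
  simp

theorem Matrix.IsHermitian.rootMultiplicity_charpoly_eq_finrank_eigenspace
    {𝕜 n : Type*} [RCLike 𝕜] [Fintype n] [DecidableEq n] {A : Matrix n n 𝕜}
    (hA : A.IsHermitian) (μ : 𝕜) :
    A.charpoly.rootMultiplicity μ =
      Module.finrank 𝕜 (Module.End.eigenspace (toEuclideanLin A) μ) := by
  have hsemisimple := (isSymmetric_toEuclideanLin_iff.mpr hA).isFinitelySemisimple
  rw [← hsemisimple.maxGenEigenspace_eq_eigenspace, LinearMap.finrank_maxGenEigenspace_eq,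
    toEuclideanLin_eq_toLin_orthonormal, Matrix.charpoly_toLin]

theorem neg_diagonal_mul_add_transpose_mul_diagonal_eq_laplacian {ι R : Type*} [Fintype ι]
    [DecidableEq ι] [CommRing R] {A L : Matrix ι ι R} {ξ : ι → R}
    (hL : L = A - diagonal (fun i => ∑ j, A i j)) (hξL : ξ ᵥ* L = 0) :
    -(diagonal ξ * L + Lᵀ * diagonal ξ) = laplacian (diagonal ξ * A + Aᵀ * diagonal ξ) := by
  have hcol : ∀ i, ∑ j, ξ j * A j i = ξ i * ∑ j, A i j := fun i => by
    simpa [hL, vecMul, dotProduct, mul_sub, diagonal_apply, sub_eq_zero] using congrFun hξL i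
  ext i j
  obtain rfl | hij := eq_or_ne i j
  · simp only [hL, laplacian, transpose_sub, diagonal_transpose, Matrix.neg_apply,
      Matrix.add_apply, Matrix.sub_apply, diagonal_mul, mul_diagonal, diagonal_apply_eq,
      transpose_apply, mul_comm _ (ξ _), Finset.sum_add_distrib, ← Finset.mul_sum, hcol]
    ring
  · simp [laplacian, hL, hij]

theorem xiL_plus_LtXi_metzler_general
    {m : ℕ} [NeZero m]
    (A D L : Matrix (Fin m) (Fin m) ℝ)
    (hA_nonneg : ∀ i j, 0 ≤ A i j)
    (hD : D = Matrix.diagonal (fun i => ∑ j, A i j))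
    (hL : L = A - D)
    (hSC : StronglyConnected A)
    (ξ : Fin m → ℝ)
    (hξ_pos : ∀ i, 0 < ξ i)
    (hξL : ξ ᵥ* L = 0)
    (S : Matrix (Fin m) (Fin m) ℝ)
    (hS : S = Matrix.diagonal ξ * L + Lᵀ * Matrix.diagonal ξ) :
    (∀ i, ∑ j, S i j = 0) ∧
    (-S).PosSemidef ∧
    Polynomial.rootMultiplicity (0 : ℝ) S.charpoly = 1 := by
  set w := diagonal ξ * A + Aᵀ * diagonal ξ
  have hSw : S = -laplacian w := by
    rw [hS, ← neg_diagonal_mul_add_transpose_mul_diagonal_eq_laplacian (hD ▸ hL) hξL, neg_neg]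
  have hw_apply (i j : Fin m) : w i j = ξ i * A i j + A j i * ξ j := by
    simp [w, diagonal_mul, mul_diagonal]
  have hw : w.IsSymm := by
    simpa [transpose_mul] using isSymm_add_transpose_self (diagonal ξ * A)
  have hw₀ (i j : Fin m) : 0 ≤ w i j := hw_apply i j ▸
    add_nonneg (mul_nonneg (hξ_pos i).le (hA_nonneg i j))
      (mul_nonneg (hA_nonneg j i) (hξ_pos j).le)
  have hconn : StronglyConnected w := hSC.mono fun i j hij => hw_apply i j ▸
    add_pos_of_pos_of_nonneg (mul_pos (hξ_pos i) hij)
      (mul_nonneg (hA_nonneg j i) (hξ_pos j).le)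
  have hS_herm : S.IsHermitian := hSw ▸ (isHermitian_iff_isSymm.mpr (isSymm_laplacian hw)).neg
  refine ⟨fun i => ?_, ?_, ?_⟩
  · simp [hSw, sum_laplacian_apply]
  · simpa [hSw] using posSemidef_laplacian hw hw₀
  · rw [hS_herm.rootMultiplicity_charpoly_eq_finrank_eigenspace, Module.End.eigenspace_zero, hSw,
      map_neg, LinearMap.ker_neg, finrank_ker_toEuclideanLin_laplacian hw hw₀ hconn]

/-- If `L` is the irreducible Laplacian of a strongly connected weighted digraph, with
positive left null vector `ξ` and `Ξ = diagonal ξ`, then `Ξ L + Lᵀ Ξ` has all row sums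
equal to zero, has nonpositive eigenvalues (i.e. its negative is positive semidefinite),
and zero is an eigenvalue of algebraic multiplicity one. -/
theorem xiL_plus_LtXi_metzler
    {m : ℕ} [NeZero m]
    (A D L : Matrix (Fin m) (Fin m) ℝ)
    (hA_nonneg : ∀ i j, 0 ≤ A i j)
    (hA_diag : ∀ i, A i i = 0)
    (hD : D = Matrix.diagonal (fun i => ∑ j, A i j))
    (hL : L = A - D)
    (hSC : StronglyConnected A)
    (ξ : Fin m → ℝ)
    (hξ_pos : ∀ i, 0 < ξ i)
    (hξL : ξ ᵥ* L = 0)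
    (hξ_sum : ∑ i, ξ i = 1)
    (S : Matrix (Fin m) (Fin m) ℝ)
    (hS : S = Matrix.diagonal ξ * L + Lᵀ * Matrix.diagonal ξ) :
    (∀ i, ∑ j, S i j = 0) ∧
    (-S).PosSemidef ∧
    Polynomial.rootMultiplicity (0 : ℝ) S.charpoly = 1 :=
  xiL_plus_LtXi_metzler_general A D L hA_nonneg hD hL hSC ξ hξ_pos hξL S hS
end

section
/- Let A be an m×m row-stochastic matrix with positive diagonal entries whose associated directed graph (edge j→i when A_ij > 0) has a spanning tree. Then lim_{k→∞} A^k = 𝟏 vᵀ, where v is the unique nonnegative vector satisfying Aᵀv = v and 𝟏ᵀv = 1. -/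
/-!
Positive diagonal entries keep a path of length `k` alive at every length `≥ k`, so the spanning
tree yields a power `A ^ N` whose column at the root is strictly positive, say `≥ δ > 0`. Then
each row of `A ^ N` puts weight `≥ δ` on one common coordinate, so `A ^ N` shrinks the spread
`max x - min x` of every vector by the factor `1 - δ`, while `A` itself never raises the maximum
nor lowers the minimum. Hence `A ^ k *ᵥ x` tends to a constant vector for every `x`, i.e.
`A ^ k → 𝟏 vᵀ`. The limit is row-stochastic and satisfies `𝟏 vᵀ A = 𝟏 vᵀ`; and every stochastic
left fixed vector `w` equals `wᵀ 𝟏 vᵀ = vᵀ`.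
-/

open Matrix Filter

/-- The digraph of `A` has a spanning tree: some vertex has a directed path to every
other vertex. -/
def HasSpanningTree {m : ℕ} (A : Matrix (Fin m) (Fin m) ℝ) : Prop :=
  ∃ i₀ : Fin m, ∀ j : Fin m, Relation.ReflTransGen (edge A) i₀ j

open Finset Topology

lemma exists_tendsto_of_monotone_of_antitone {μ M : ℕ → ℝ} (hμ : Monotone μ) (hM : Antitone M)
    (hle : ∀ k, μ k ≤ M k) (hgap : ∀ ε > 0, ∃ k, M k - μ k < ε) :
    ∃ c, Tendsto μ atTop (𝓝 c) ∧ Tendsto M atTop (𝓝 c) := by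
  have hμ_bdd : BddAbove (Set.range μ) :=
    ⟨M 0, Set.forall_mem_range.2 fun k => (hle k).trans (hM (Nat.zero_le k))⟩
  have hM_bdd : BddBelow (Set.range M) :=
    ⟨μ 0, Set.forall_mem_range.2 fun k => (hμ (Nat.zero_le k)).trans (hle k)⟩
  have hμ_lim := tendsto_atTop_ciSup hμ hμ_bdd
  have hM_lim := tendsto_atTop_ciInf hM hM_bdd
  have hsup_le : ⨆ k, μ k ≤ ⨅ k, M k := le_of_tendsto_of_tendsto' hμ_lim hM_lim hle
  have hinf_le : ⨅ k, M k ≤ ⨆ k, μ k := by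
    refine le_of_forall_pos_lt_add fun ε hε => ?_
    obtain ⟨k, hk⟩ := hgap ε hε
    linarith [ciInf_le hM_bdd k, le_ciSup hμ_bdd k]
  exact ⟨_, hμ_lim, le_antisymm hinf_le hsup_le ▸ hM_lim⟩

namespace Matrix

lemma mul_apply_pos {l m n : Type*} [Fintype m] {A : Matrix l m ℝ} {B : Matrix m n ℝ}
    (hA : ∀ i j, 0 ≤ A i j) (hB : ∀ i j, 0 ≤ B i j) {i : l} {k : m} {j : n} (hik : 0 < A i k)
    (hkj : 0 < B k j) : 0 < (A * B) i j := by
  rw [mul_apply]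
  exact (mul_pos hik hkj).trans_le <|
    single_le_sum (f := fun k => A i k * B k j) (fun k _ => mul_nonneg (hA i k) (hB k j))
      (mem_univ k)

section RowStochastic

variable {n : Type*} [Fintype n] [DecidableEq n]

lemma isClosed_rowStochastic : IsClosed (rowStochastic ℝ n : Set (Matrix n n ℝ)) := by
  have hnonneg : IsClosed {M : Matrix n n ℝ | ∀ i j, 0 ≤ M i j} := by
    simp only [Set.ofPred_forall]
    exact isClosed_iInter fun i => isClosed_iInter fun j =>
      isClosed_le continuous_const ((continuous_apply j).comp (continuous_apply i))
  have hone : IsClosed {M : Matrix n n ℝ | M *ᵥ 1 = 1} :=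
    isClosed_eq (continuous_id.matrix_mulVec continuous_const) continuous_const
  exact hnonneg.inter hone

lemma pow_apply_pos_of_le {A : Matrix n n ℝ} (hA : A ∈ rowStochastic ℝ n)
    (h_diag : ∀ i, 0 < A i i) {i j : n} {k l : ℕ} (hkl : k ≤ l) (hk : 0 < (A ^ k) i j) :
    0 < (A ^ l) i j := by
  induction l, hkl using Nat.le_induction with
  | base => exact hk
  | succ l _ ih =>
    rw [pow_succ']
    exact mul_apply_pos (fun _ _ => nonneg_of_mem_rowStochastic hA)
      (fun _ _ => nonneg_of_mem_rowStochastic (pow_mem hA l)) (h_diag i) ih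

lemma mulVec_apply_le_of_le {B : Matrix n n ℝ} (hB : B ∈ rowStochastic ℝ n) {i₀ : n} {δ S : ℝ}
    (hδ : ∀ i, δ ≤ B i i₀) {x : n → ℝ} (hx : ∀ j, x j ≤ S) (i : n) :
    (B *ᵥ x) i ≤ δ * x i₀ + (1 - δ) * S := by
  have hgap : S - (B *ᵥ x) i = ∑ j, B i j * (S - x j) := by
    simp only [mul_sub, sum_sub_distrib, ← sum_mul, sum_row_of_mem_rowStochastic hB i, one_mul,
      mulVec, dotProduct]
  have hterm : B i i₀ * (S - x i₀) ≤ ∑ j, B i j * (S - x j) :=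
    single_le_sum (f := fun j => B i j * (S - x j))
      (fun j _ => mul_nonneg (nonneg_of_mem_rowStochastic hB) (sub_nonneg.2 (hx j))) (mem_univ i₀)
  nlinarith [hδ i, hx i₀]

lemma le_mulVec_apply_of_le {B : Matrix n n ℝ} (hB : B ∈ rowStochastic ℝ n) {i₀ : n} {δ s : ℝ}
    (hδ : ∀ i, δ ≤ B i i₀) {x : n → ℝ} (hx : ∀ j, s ≤ x j) (i : n) :
    δ * x i₀ + (1 - δ) * s ≤ (B *ᵥ x) i := by
  have := mulVec_apply_le_of_le hB hδ (x := -x) (S := -s) (fun j => neg_le_neg (hx j)) i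
  simp only [mulVec_neg, Pi.neg_apply] at this
  linarith

variable [Nonempty n]

noncomputable def spread (x : n → ℝ) : ℝ :=
  univ.sup' univ_nonempty x - univ.inf' univ_nonempty x

lemma sup'_mulVec_le {B : Matrix n n ℝ} (hB : B ∈ rowStochastic ℝ n) (x : n → ℝ) :
    univ.sup' univ_nonempty (B *ᵥ x) ≤ univ.sup' univ_nonempty x :=
  sup'_le _ _ fun i _ => by
    simpa using mulVec_apply_le_of_le hB (δ := 0) (i₀ := i) (S := univ.sup' univ_nonempty x)
      (fun _ => nonneg_of_mem_rowStochastic hB) (fun j => le_sup' x (mem_univ j)) i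

lemma inf'_le_inf'_mulVec {B : Matrix n n ℝ} (hB : B ∈ rowStochastic ℝ n) (x : n → ℝ) :
    univ.inf' univ_nonempty x ≤ univ.inf' univ_nonempty (B *ᵥ x) :=
  le_inf' _ _ fun i _ => by
    simpa using le_mulVec_apply_of_le hB (δ := 0) (i₀ := i) (s := univ.inf' univ_nonempty x)
      (fun _ => nonneg_of_mem_rowStochastic hB) (fun j => inf'_le x (mem_univ j)) i

lemma spread_mulVec_le {B : Matrix n n ℝ} (hB : B ∈ rowStochastic ℝ n) {i₀ : n} {δ : ℝ}
    (hδ : ∀ i, δ ≤ B i i₀) (x : n → ℝ) : spread (B *ᵥ x) ≤ (1 - δ) * spread x := by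
  have hsup : univ.sup' univ_nonempty (B *ᵥ x) ≤ δ * x i₀ + (1 - δ) * univ.sup' univ_nonempty x :=
    sup'_le _ _ fun i _ => mulVec_apply_le_of_le hB hδ (fun j => le_sup' x (mem_univ j)) i
  have hinf : δ * x i₀ + (1 - δ) * univ.inf' univ_nonempty x ≤ univ.inf' univ_nonempty (B *ᵥ x) :=
    le_inf' _ _ fun i _ => le_mulVec_apply_of_le hB hδ (fun j => inf'_le x (mem_univ j)) i
  unfold spread
  linarith

lemma spread_pow_mulVec_le {B : Matrix n n ℝ} (hB : B ∈ rowStochastic ℝ n) {i₀ : n} {δ : ℝ}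
    (hδ : ∀ i, δ ≤ B i i₀) (x : n → ℝ) (q : ℕ) :
    spread (B ^ q *ᵥ x) ≤ (1 - δ) ^ q * spread x := by
  have hδ1 : 0 ≤ 1 - δ := sub_nonneg.2 ((hδ i₀).trans (le_one_of_mem_rowStochastic hB))
  induction q with
  | zero => simp
  | succ q ih =>
    calc spread (B ^ (q + 1) *ᵥ x) = spread (B *ᵥ (B ^ q *ᵥ x)) := by
          rw [pow_succ', mulVec_mulVec]
      _ ≤ (1 - δ) * spread (B ^ q *ᵥ x) := spread_mulVec_le hB hδ _
      _ ≤ (1 - δ) ^ (q + 1) * spread x := by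
          rw [pow_succ', mul_assoc]; exact mul_le_mul_of_nonneg_left ih hδ1

lemma exists_tendsto_pow_mulVec_const {A : Matrix n n ℝ} (hA : A ∈ rowStochastic ℝ n) {N : ℕ}
    {i₀ : n} (hcol : ∀ i, 0 < (A ^ N) i i₀) (x : n → ℝ) :
    ∃ c, Tendsto (fun k => A ^ k *ᵥ x) atTop (𝓝 fun _ => c) := by
  set δ := univ.inf' univ_nonempty fun i => (A ^ N) i i₀
  have hδ_pos : 0 < δ := (lt_inf'_iff _).2 fun i _ => hcol i
  have hδ_col : ∀ i, δ ≤ (A ^ N) i i₀ := fun i => inf'_le _ (mem_univ i)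
  set M := fun k => univ.sup' univ_nonempty (A ^ k *ᵥ x)
  set μ := fun k => univ.inf' univ_nonempty (A ^ k *ᵥ x)
  have hM : Antitone M := antitone_nat_of_succ_le fun k => by
    simpa only [M, pow_succ', ← mulVec_mulVec] using sup'_mulVec_le hA (A ^ k *ᵥ x)
  have hμ : Monotone μ := monotone_nat_of_le_succ fun k => by
    simpa only [μ, pow_succ', ← mulVec_mulVec] using inf'_le_inf'_mulVec hA (A ^ k *ᵥ x)
  have hgap : ∀ ε > 0, ∃ k, M k - μ k < ε := by
    intro ε hε
    have hδ_le : δ ≤ 1 := (hδ_col i₀).trans (le_one_of_mem_rowStochastic (pow_mem hA N))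
    have hgeom : Tendsto (fun q : ℕ => (1 - δ) ^ q * spread x) atTop (𝓝 0) := by
      simpa using (tendsto_pow_atTop_nhds_zero_of_lt_one (by linarith) (by linarith)).mul_const
        (spread x)
    obtain ⟨q, hq⟩ := (hgeom.eventually (gt_mem_nhds hε)).exists
    refine ⟨N * q, lt_of_le_of_lt ?_ hq⟩
    show spread (A ^ (N * q) *ᵥ x) ≤ _
    rw [pow_mul]
    exact spread_pow_mulVec_le (pow_mem hA N) hδ_col x q
  obtain ⟨c, hμ_lim, hM_lim⟩ := exists_tendsto_of_monotone_of_antitone hμ hM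
    (fun k => (inf'_le _ (mem_univ i₀)).trans (le_sup' _ (mem_univ i₀))) hgap
  exact ⟨c, tendsto_pi_nhds.2 fun i => tendsto_of_tendsto_of_tendsto_of_le_of_le hμ_lim hM_lim
    (fun k => inf'_le _ (mem_univ i)) (fun k => le_sup' _ (mem_univ i))⟩

lemma exists_tendsto_pow_of_col_pos {A : Matrix n n ℝ} (hA : A ∈ rowStochastic ℝ n) {N : ℕ}
    {i₀ : n} (hcol : ∀ i, 0 < (A ^ N) i i₀) :
    ∃ v : n → ℝ, Tendsto (fun k => A ^ k) atTop (𝓝 (of fun _ j => v j)) := by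
  choose v hv using fun j => exists_tendsto_pow_mulVec_const hA hcol (Pi.single j 1)
  refine ⟨v, tendsto_pi_nhds.2 fun i => tendsto_pi_nhds.2 fun j => ?_⟩
  simpa [mulVec_single_one] using tendsto_pi_nhds.1 (hv j) i

end RowStochastic

section Limit

variable {n : Type*} [Fintype n] [DecidableEq n] {A P : Matrix n n ℝ}

lemma mul_eq_of_tendsto_pow (h : Tendsto (fun k => A ^ k) atTop (𝓝 P)) : P * A = P :=
  tendsto_nhds_unique (h.mul_const A) <| by
    simpa only [Function.comp_def, pow_succ] using h.comp (tendsto_add_atTop_nat 1)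

lemma vecMul_eq_of_tendsto_pow (h : Tendsto (fun k => A ^ k) atTop (𝓝 P)) {w : n → ℝ}
    (hw : w ᵥ* A = w) : w ᵥ* P = w := by
  have hpow : ∀ k, w ᵥ* A ^ k = w := fun k => by
    induction k with
    | zero => simp
    | succ k ih => rw [pow_succ, ← vecMul_vecMul, ih, hw]
  have hlim : Tendsto (fun k => w ᵥ* A ^ k) atTop (𝓝 (w ᵥ* P)) :=
    ((continuous_const.matrix_vecMul continuous_id).tendsto P).comp h
  exact tendsto_nhds_unique hlim (by simp only [hpow]; exact tendsto_const_nhds)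

end Limit

end Matrix

lemma exists_pow_apply_pos_of_reflTransGen {m : ℕ} {A : Matrix (Fin m) (Fin m) ℝ}
    (hA : A ∈ rowStochastic ℝ (Fin m)) {i j : Fin m} (h : Relation.ReflTransGen (edge A) i j) :
    ∃ k, 0 < (A ^ k) j i := by
  induction h with
  | refl => exact ⟨0, by simp⟩
  | tail _ hedge ih =>
    obtain ⟨k, hk⟩ := ih
    refine ⟨k + 1, ?_⟩
    rw [pow_succ']
    exact mul_apply_pos (fun _ _ => nonneg_of_mem_rowStochastic hA)
      (fun _ _ => nonneg_of_mem_rowStochastic (pow_mem hA k)) hedge hk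

lemma HasSpanningTree.exists_pow_col_pos {m : ℕ} {A : Matrix (Fin m) (Fin m) ℝ}
    (hA : A ∈ rowStochastic ℝ (Fin m)) (h_diag : ∀ i, 0 < A i i) (h : HasSpanningTree A) :
    ∃ i₀ N, ∀ j, 0 < (A ^ N) j i₀ := by
  obtain ⟨i₀, hreach⟩ := h
  choose k hk using fun j => exists_pow_apply_pos_of_reflTransGen hA (hreach j)
  exact ⟨i₀, univ.sup k, fun j => pow_apply_pos_of_le hA h_diag (le_sup (mem_univ j)) (hk j)⟩

theorem stochastic_spanning_tree_power_limit_general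
    {m : ℕ}
    (A : Matrix (Fin m) (Fin m) ℝ)
    (h_nonneg : ∀ i j, 0 ≤ A i j)
    (h_rowsum : ∀ i, ∑ j, A i j = 1)
    (h_diag : ∀ i, 0 < A i i)
    (h_tree : HasSpanningTree A) :
    ∃ v : Fin m → ℝ,
      (∀ i, 0 ≤ v i) ∧ Aᵀ *ᵥ v = v ∧ ∑ i, v i = 1 ∧
      (∀ w : Fin m → ℝ, (∀ i, 0 ≤ w i) → Aᵀ *ᵥ w = w → ∑ i, w i = 1 → w = v) ∧
      Tendsto (fun k : ℕ => A ^ k) atTop (nhds (Matrix.of fun _ j => v j)) := by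
  have hA : A ∈ rowStochastic ℝ (Fin m) := mem_rowStochastic_iff_sum.2 ⟨h_nonneg, h_rowsum⟩
  obtain ⟨i₀, N, hcol⟩ := h_tree.exists_pow_col_pos hA h_diag
  have : Nonempty (Fin m) := ⟨i₀⟩
  obtain ⟨v, hv⟩ := exists_tendsto_pow_of_col_pos hA hcol
  have hP : of (fun _ j => v j) ∈ rowStochastic ℝ (Fin m) :=
    isClosed_rowStochastic.mem_of_tendsto hv (Eventually.of_forall fun k => pow_mem hA k)
  have hfix : v ᵥ* A = v := funext fun j => by
    simpa [mul_apply, vecMul, dotProduct] using congrFun₂ (mul_eq_of_tendsto_pow hv) i₀ j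
  have hsum : ∑ j, v j = 1 := by simpa using sum_row_of_mem_rowStochastic hP i₀
  refine ⟨v, fun j => nonneg_of_mem_rowStochastic hP (i := i₀), by rw [mulVec_transpose, hfix],
    hsum, fun w _ hw hw_sum => ?_, hv⟩
  rw [mulVec_transpose] at hw
  funext j
  simpa [vecMul, dotProduct, ← sum_mul, hw_sum] using
    (congrFun (vecMul_eq_of_tendsto_pow hv hw) j).symm

/-- For a row-stochastic matrix `A` with positive diagonal whose digraph has a spanning
tree, `A^k → 𝟏 vᵀ` where `v` is the unique nonnegative vector with `Aᵀ v = v` and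
`𝟏ᵀ v = 1`. -/
theorem stochastic_spanning_tree_power_limit
    {m : ℕ} [NeZero m]
    (A : Matrix (Fin m) (Fin m) ℝ)
    (h_nonneg : ∀ i j, 0 ≤ A i j)
    (h_rowsum : ∀ i, ∑ j, A i j = 1)
    (h_diag : ∀ i, 0 < A i i)
    (h_tree : HasSpanningTree A) :
    ∃ v : Fin m → ℝ,
      (∀ i, 0 ≤ v i) ∧ Aᵀ *ᵥ v = v ∧ ∑ i, v i = 1 ∧
      (∀ w : Fin m → ℝ, (∀ i, 0 ≤ w i) → Aᵀ *ᵥ w = w → ∑ i, w i = 1 → w = v) ∧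
      Tendsto (fun k : ℕ => A ^ k) atTop (nhds (Matrix.of fun _ j => v j)) :=
  stochastic_spanning_tree_power_limit_general A h_nonneg h_rowsum h_diag h_tree
end

section
/- Let L be an m×m Laplacian matrix (off-diagonal entries nonnegative, row sums zero) whose digraph has a spanning tree, and let T₀ > 0 satisfy T₀ ≤ γ/max_i(−L_ii) for some γ ∈ (0,1). Then for any initial value x₀ ∈ R^m, the piecewise-linear trajectory x(t) = (I + (t − kT₀)L)(I + T₀L)^k x₀ for t ∈ [kT₀, (k+1)T₀) converges as t → ∞ to 𝟏 ηᵀ x₀, where η is the nonnegative left eigenvector of L for eigenvalue zero with 𝟏ᵀη = 1. -/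
open Matrix Filter

/-- Edge relation of the digraph of a Laplacian `L`: there is a directed link from `j`
to `i` when `i ≠ j` and `L i j > 0`. -/
def edgeL {m : ℕ} (L : Matrix (Fin m) (Fin m) ℝ) (j i : Fin m) : Prop :=
  i ≠ j ∧ 0 < L i j

/-- The digraph of `L` has a spanning tree. -/
def HasSpanningTreeL {m : ℕ} (L : Matrix (Fin m) (Fin m) ℝ) : Prop :=
  ∃ i₀ : Fin m, ∀ j : Fin m, Relation.ReflTransGen (edgeL L) i₀ j

/-!
For `0 ≤ s ≤ T₀` the matrix `I + sL` is row-stochastic; `P = I + T₀L` moreover has a positive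
diagonal (as `T₀ · max (-L i i) ≤ γ < 1`) and positive entries along the edges of the digraph.
Walking down the spanning tree from its root `i₀`, some power `P ^ N` has its column `i₀` bounded
below by `δ > 0`, so the oscillation `max - min` of `P ^ k x₀` decays geometrically. For
`k = ⌊t / T₀⌋` both `x t` and `η ⬝ᵥ x₀ = η ⬝ᵥ P ^ k x₀` are averages of the entries of
`P ^ k x₀`, hence lie within that oscillation of each other.
-/

open Finset Topology

section ConvexCombination

variable {ι : Type*} [Fintype ι] {w v : ι → ℝ}

theorem dotProduct_le_add_mul_sub (hw : ∀ j, 0 ≤ w j) (hw1 : ∑ j, w j = 1) {c : ι} {d S : ℝ}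
    (hd : d ≤ w c) (hS : ∀ j, v j ≤ S) : w ⬝ᵥ v ≤ S + d * (v c - S) := by
  classical
  have hshift : w ⬝ᵥ v - S = ∑ j, w j * (v j - S) := by
    simp only [dotProduct, mul_sub, sum_sub_distrib, ← sum_mul, hw1, one_mul]
  have hrest : ∑ j ∈ univ.erase c, w j * (v j - S) ≤ 0 :=
    sum_nonpos fun j _ => mul_nonpos_of_nonneg_of_nonpos (hw j) (by linarith [hS j])
  have hpivot : w c * (v c - S) ≤ d * (v c - S) :=
    mul_le_mul_of_nonpos_right hd (by linarith [hS c])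
  rw [← sum_erase_add _ _ (mem_univ c)] at hshift
  linarith

theorem add_mul_sub_le_dotProduct (hw : ∀ j, 0 ≤ w j) (hw1 : ∑ j, w j = 1) {c : ι} {d I : ℝ}
    (hd : d ≤ w c) (hI : ∀ j, I ≤ v j) : I + d * (v c - I) ≤ w ⬝ᵥ v := by
  have := dotProduct_le_add_mul_sub (v := -v) hw hw1 hd (S := -I) fun j => neg_le_neg (hI j)
  simp only [dotProduct_neg, Pi.neg_apply] at this
  linarith

end ConvexCombination

section Oscillation

variable {n : Type*} [Fintype n] [Nonempty n]

noncomputable def osc (v : n → ℝ) : ℝ :=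
  univ.sup' univ_nonempty v - univ.inf' univ_nonempty v

theorem osc_nonneg (v : n → ℝ) : 0 ≤ osc v := by
  obtain ⟨i⟩ := ‹Nonempty n›
  exact sub_nonneg.2 ((inf'_le v (mem_univ i)).trans (le_sup' v (mem_univ i)))

theorem dotProduct_mem_Icc {w : n → ℝ} (hw : ∀ j, 0 ≤ w j) (hw1 : ∑ j, w j = 1) (v : n → ℝ) :
    w ⬝ᵥ v ∈ Set.Icc (univ.inf' univ_nonempty v) (univ.sup' univ_nonempty v) := by
  obtain ⟨c⟩ := ‹Nonempty n›
  set I := univ.inf' univ_nonempty v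
  set S := univ.sup' univ_nonempty v
  constructor
  · simpa using add_mul_sub_le_dotProduct (I := I) hw hw1 (hw c) fun j => inf'_le v (mem_univ j)
  · simpa using dotProduct_le_add_mul_sub (S := S) hw hw1 (hw c) fun j => le_sup' v (mem_univ j)

variable [DecidableEq n] {M : Matrix n n ℝ}

theorem dist_mulVec_const_le_osc (hM : M ∈ rowStochastic ℝ n) {w : n → ℝ} (hw : ∀ j, 0 ≤ w j)
    (hw1 : ∑ j, w j = 1) (v : n → ℝ) : dist (M *ᵥ v) (fun _ => w ⬝ᵥ v) ≤ osc v := by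
  refine (dist_pi_le_iff (osc_nonneg v)).2 fun i => ?_
  have hMi : (M *ᵥ v) i ∈ _ :=
    dotProduct_mem_Icc (fun _ => nonneg_of_mem_rowStochastic hM)
      (sum_row_of_mem_rowStochastic hM i) v
  have hwv := dotProduct_mem_Icc hw hw1 v
  rw [Real.dist_eq, abs_sub_le_iff, osc]
  exact ⟨by linarith [hMi.2, hwv.1], by linarith [hMi.1, hwv.2]⟩

/-- Every row of `M` puts weight at least `d` on the common value `v c`. -/
theorem osc_mulVec_le (hM : M ∈ rowStochastic ℝ n) {c : n} {d : ℝ} (hd : ∀ i, d ≤ M i c)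
    (v : n → ℝ) : osc (M *ᵥ v) ≤ (1 - d) * osc v := by
  set S := univ.sup' univ_nonempty v
  set I := univ.inf' univ_nonempty v
  have hup : univ.sup' univ_nonempty (M *ᵥ v) ≤ S + d * (v c - S) :=
    sup'_le _ _ fun i _ => dotProduct_le_add_mul_sub (fun _ => nonneg_of_mem_rowStochastic hM)
      (sum_row_of_mem_rowStochastic hM i) (hd i) fun j => le_sup' v (mem_univ j)
  have hlo : I + d * (v c - I) ≤ univ.inf' univ_nonempty (M *ᵥ v) :=
    le_inf' _ _ fun i _ => add_mul_sub_le_dotProduct (fun _ => nonneg_of_mem_rowStochastic hM)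
      (sum_row_of_mem_rowStochastic hM i) (hd i) fun j => inf'_le v (mem_univ j)
  rw [osc, osc]
  linarith

theorem tendsto_osc_pow_mulVec (hM : M ∈ rowStochastic ℝ n) {N : ℕ} (hN : 0 < N) {c : n}
    (hcol : ∀ i, 0 < (M ^ N) i c) (v : n → ℝ) :
    Tendsto (fun k => osc (M ^ k *ᵥ v)) atTop (𝓝 0) := by
  set a := fun k => osc (M ^ k *ᵥ v)
  set δ := univ.inf' univ_nonempty fun i => (M ^ N) i c
  have hMN := pow_mem hM N
  have hδ_pos : 0 < δ := (lt_inf'_iff _).2 fun i _ => hcol i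
  have hδ_le : ∀ i, δ ≤ (M ^ N) i c := fun i => inf'_le _ (mem_univ i)
  have hδ_le_one : δ ≤ 1 := (hδ_le c).trans (le_one_of_mem_rowStochastic hMN)
  have hpow_mulVec : ∀ j k, M ^ (j + k) *ᵥ v = M ^ j *ᵥ (M ^ k *ᵥ v) := fun j k => by
    rw [mulVec_mulVec, pow_add]
  have ha_anti : Antitone a := antitone_nat_of_succ_le fun k => by
    simpa only [a, add_comm k, hpow_mulVec 1 k, pow_one, sub_zero, one_mul] using
      osc_mulVec_le hM (d := 0) (c := c) (fun i => nonneg_of_mem_rowStochastic hM) (M ^ k *ᵥ v)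
  have ha_geom : ∀ k, a (k * N) ≤ (1 - δ) ^ k * a 0 := fun k => by
    induction k with
    | zero => simp
    | succ k ih =>
      calc a ((k + 1) * N) ≤ (1 - δ) * a (k * N) := by
            simpa [a, add_mul, add_comm, hpow_mulVec N (k * N)] using
              osc_mulVec_le hMN hδ_le (M ^ (k * N) *ᵥ v)
        _ ≤ (1 - δ) * ((1 - δ) ^ k * a 0) := by gcongr
        _ = (1 - δ) ^ (k + 1) * a 0 := by ring
  have hgeom : Tendsto (fun k => (1 - δ) ^ (k / N) * a 0) atTop (𝓝 0) := by
    simpa using ((tendsto_pow_atTop_nhds_zero_of_lt_one (by linarith) (by linarith)).comp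
      (Nat.tendsto_div_const_atTop hN.ne')).mul_const (a 0)
  exact squeeze_zero (fun k => osc_nonneg _)
    (fun k => (ha_anti (Nat.div_mul_le_self k N)).trans (ha_geom (k / N))) hgeom

end Oscillation

section Reachability

variable {n : Type*} [Fintype n] [DecidableEq n] {P : Matrix n n ℝ}

theorem pow_succ_apply_pos (hP : P ∈ rowStochastic ℝ n) {k : ℕ} {i b c : n} (hcb : 0 < P c b)
    (hb : 0 < (P ^ k) b i) : 0 < (P ^ (k + 1)) c i := by
  rw [pow_succ', mul_apply]
  exact (mul_pos hcb hb).trans_le <| single_le_sum (f := fun l => P c l * (P ^ k) l i)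
    (fun l _ => mul_nonneg (nonneg_of_mem_rowStochastic hP)
      (nonneg_of_mem_rowStochastic (pow_mem hP k))) (mem_univ b)

theorem pow_apply_self_pos (hP : P ∈ rowStochastic ℝ n) {i : n} (hi : 0 < P i i) (k : ℕ) :
    0 < (P ^ k) i i := by
  induction k with
  | zero => simp
  | succ k ih => exact pow_succ_apply_pos hP hi ih

theorem eventually_pow_apply_pos (hP : P ∈ rowStochastic ℝ n) (hdiag : ∀ i, 0 < P i i)
    {i j : n} (h : Relation.ReflTransGen (fun a b => 0 < P b a) i j) :
    ∀ᶠ k in atTop, 0 < (P ^ k) j i := by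
  induction h with
  | refl => exact Eventually.of_forall (pow_apply_self_pos hP (hdiag i))
  | tail _ hbc ih =>
    filter_upwards [(tendsto_sub_atTop_nat 1).eventually ih, eventually_ge_atTop 1]
      with k hk hk1
    simpa [Nat.sub_add_cancel hk1] using pow_succ_apply_pos hP hbc hk

end Reachability

section Laplacian

variable {n : Type*} [Fintype n] [DecidableEq n] {L : Matrix n n ℝ}

theorem diag_nonpos_of_rowsum_eq_zero (h_offdiag : ∀ i j, i ≠ j → 0 ≤ L i j)
    (h_rowsum : ∀ i, ∑ j, L i j = 0) (i : n) : L i i ≤ 0 := by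
  have hrest : 0 ≤ ∑ j ∈ univ.erase i, L i j :=
    sum_nonneg fun j hj => h_offdiag i j (ne_of_mem_erase hj).symm
  linarith [h_rowsum i ▸ sum_erase_add univ (L i) (mem_univ i)]

theorem one_add_smul_mem_rowStochastic (h_offdiag : ∀ i j, i ≠ j → 0 ≤ L i j)
    (h_rowsum : ∀ i, ∑ j, L i j = 0) {s T : ℝ} (hs : s ∈ Set.Icc 0 T)
    (hT : ∀ i, T * -L i i ≤ 1) : 1 + s • L ∈ rowStochastic ℝ n := by
  refine mem_rowStochastic_iff_sum.2 ⟨fun i j => ?_, fun i => ?_⟩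
  · rcases eq_or_ne i j with rfl | hij
    · have hLi := neg_nonneg.2 (diag_nonpos_of_rowsum_eq_zero h_offdiag h_rowsum i)
      have : s * -L i i ≤ T * -L i i := mul_le_mul_of_nonneg_right hs.2 hLi
      simp only [Matrix.add_apply, one_apply_eq, Matrix.smul_apply, smul_eq_mul]
      linarith [hT i]
    · simpa [one_apply_ne hij] using mul_nonneg hs.1 (h_offdiag i j hij)
  · simp [sum_add_distrib, ← mul_sum, h_rowsum i, one_apply]

theorem vecMul_one_add_smul_pow {η : n → ℝ} (hηL : η ᵥ* L = 0) (s : ℝ) (k : ℕ) :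
    η ᵥ* (1 + s • L) ^ k = η := by
  induction k with
  | zero => simp
  | succ k ih => rw [pow_succ, ← vecMul_vecMul, ih, vecMul_add, vecMul_smul, hηL, smul_zero,
      add_zero, vecMul_one]

end Laplacian

theorem one_add_smul_apply_self_pos {n : Type*} [DecidableEq n] {L : Matrix n n ℝ} {s : ℝ}
    {i : n} (h : s * -L i i < 1) : 0 < (1 + s • L) i i := by
  simp only [Matrix.add_apply, one_apply_eq, Matrix.smul_apply, smul_eq_mul]
  linarith

theorem one_add_smul_apply_pos_of_edgeL {m : ℕ} {L : Matrix (Fin m) (Fin m) ℝ} {s : ℝ}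
    (hs : 0 < s) {i j : Fin m} (h : edgeL L j i) : 0 < (1 + s • L) i j := by
  simpa [one_apply_ne h.1] using mul_pos hs h.2

theorem mul_le_of_le_div_of_nonneg {α : Type*} [Field α] [LinearOrder α] [IsStrictOrderedRing α]
    {a b c : α} (ha : 0 < a) (hc : 0 ≤ c) (h : a ≤ b / c) : a * c ≤ b := by
  rcases hc.eq_or_lt with rfl | hc
  · rw [div_zero] at h
    linarith
  · exact (le_div_iff₀ hc).1 h

theorem floor_div_mem_Ico {t T : ℝ} (ht : 0 ≤ t) (hT : 0 < T) :
    t ∈ Set.Ico ((⌊t / T⌋₊ : ℝ) * T) ((⌊t / T⌋₊ + 1 : ℝ) * T) :=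
  ⟨(le_div_iff₀ hT).1 (Nat.floor_le (div_nonneg ht hT.le)),
    (div_lt_iff₀ hT).1 (Nat.lt_floor_add_one _)⟩

/-- Periodic self-triggered consensus: if `L` is a Laplacian whose digraph has a spanning
tree and `0 < T₀ ≤ γ / max_i (-L i i)` for some `γ ∈ (0,1)`, then the piecewise-linear
trajectory `x(t) = (I + (t - kT₀)L)(I + T₀L)^k x₀` on `[kT₀, (k+1)T₀)` converges to
`𝟏 ηᵀ x₀`, where `η ≥ 0` is the left eigenvector of `L` for eigenvalue zero with
`𝟏ᵀ η = 1`. -/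
theorem periodic_self_triggered_consensus
    {m : ℕ} [NeZero m]
    (L : Matrix (Fin m) (Fin m) ℝ)
    (h_offdiag : ∀ i j, i ≠ j → 0 ≤ L i j)
    (h_rowsum : ∀ i, ∑ j, L i j = 0)
    (h_tree : HasSpanningTreeL L)
    (γ T₀ : ℝ) (hγ : γ ∈ Set.Ioo (0:ℝ) 1) (hT₀_pos : 0 < T₀)
    (hT₀ : T₀ ≤ γ / Finset.univ.sup' Finset.univ_nonempty (fun i => -L i i))
    (η : Fin m → ℝ)
    (hη_nonneg : ∀ i, 0 ≤ η i) (hηL : η ᵥ* L = 0) (hη_sum : ∑ i, η i = 1)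
    (x₀ : Fin m → ℝ)
    (x : ℝ → Fin m → ℝ)
    (hx : ∀ k : ℕ, ∀ t ∈ Set.Ico ((k : ℝ) * T₀) ((k + 1 : ℝ) * T₀),
      x t = ((1 : Matrix (Fin m) (Fin m) ℝ) + (t - k * T₀) • L) *ᵥ
              (((1 : Matrix (Fin m) (Fin m) ℝ) + T₀ • L) ^ k *ᵥ x₀)) :
    Tendsto x atTop (nhds (fun _ => η ⬝ᵥ x₀)) := by
  obtain ⟨i₀, h_root⟩ := h_tree
  have hdiag := diag_nonpos_of_rowsum_eq_zero h_offdiag h_rowsum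
  have hTL : ∀ i, T₀ * -L i i < 1 := fun i => by
    have hsup := le_sup' (fun i => -L i i) (mem_univ i)
    calc T₀ * -L i i ≤ T₀ * univ.sup' univ_nonempty (fun i => -L i i) := by gcongr
      _ ≤ γ := mul_le_of_le_div_of_nonneg hT₀_pos ((neg_nonneg.2 (hdiag i)).trans hsup) hT₀
      _ < 1 := hγ.2
  set P : Matrix (Fin m) (Fin m) ℝ := 1 + T₀ • L
  have hstoch : ∀ s ∈ Set.Icc 0 T₀, 1 + s • L ∈ rowStochastic ℝ (Fin m) := fun s hs =>
    one_add_smul_mem_rowStochastic h_offdiag h_rowsum hs fun i => (hTL i).le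
  have hP : P ∈ rowStochastic ℝ (Fin m) := hstoch T₀ ⟨hT₀_pos.le, le_rfl⟩
  have hcol : ∀ᶠ k in atTop, ∀ j, 0 < (P ^ k) j i₀ := eventually_all.2 fun j =>
    eventually_pow_apply_pos hP (fun i => one_add_smul_apply_self_pos (hTL i))
      (Relation.ReflTransGen.mono (fun _ _ => one_add_smul_apply_pos_of_edgeL hT₀_pos) _ _
        (h_root j))
  obtain ⟨N, hN, hNcol⟩ := ((eventually_gt_atTop 0).and hcol).exists
  have hbound : ∀ t ≥ 0, dist (x t) (fun _ => η ⬝ᵥ x₀) ≤ osc (P ^ ⌊t / T₀⌋₊ *ᵥ x₀) := by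
    intro t ht
    have ht_mem := floor_div_mem_Ico ht hT₀_pos
    rw [hx _ t ht_mem, ← vecMul_one_add_smul_pow hηL T₀ ⌊t / T₀⌋₊, ← dotProduct_mulVec]
    refine dist_mulVec_const_le_osc (hstoch _ ⟨?_, ?_⟩) hη_nonneg hη_sum _ <;>
      linarith [ht_mem.1, ht_mem.2]
  rw [tendsto_iff_dist_tendsto_zero]
  exact squeeze_zero' (Eventually.of_forall fun _ => dist_nonneg)
    ((eventually_ge_atTop 0).mono hbound)
    ((tendsto_osc_pow_mulVec hP hN hNcol x₀).comp
      (tendsto_nat_floor_atTop.comp (tendsto_id.atTop_div_const hT₀_pos)))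
end

section
/- Let L̃ be an m×m irreducible Laplacian (zero row sums, nonnegative off-diagonal entries) with positive left null vector ξ, Ξ = diag(ξ), and let D = diag(D₁,...,D_m) be a diagonal negative semi-definite matrix with at least one D_i < 0. Then Ξ(L̃ + D) is negative definite, i.e., yᵀΞ(L̃+D)y < 0 for every nonzero y ∈ R^m. -/
/-!
Since `ξᵀ L̃ = 0` and `L̃` has zero row sums, `A = Ξ L̃` has zero row and column sums, so its
quadratic form is the weighted Dirichlet form `yᵀ A y = -½ ∑ᵢⱼ ξᵢ L̃ᵢⱼ (yᵢ - yⱼ)²`, which is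
`≤ 0` and vanishes only if `y` is constant along every edge, hence constant by irreducibility.
The diagonal part `∑ᵢ ξᵢ Dᵢ yᵢ²` is also `≤ 0`, and vanishes on a constant `y` only if `y = 0`,
because some `Dᵢ < 0`.
-/

open Matrix

/-- Edge relation: a directed link from `j` to `i` when `i ≠ j` and `M i j > 0`. -/
def edgeM {m : ℕ} (M : Matrix (Fin m) (Fin m) ℝ) (j i : Fin m) : Prop :=
  i ≠ j ∧ 0 < M i j

/-- Irreducibility / strong connectivity of the digraph of `M`. -/
def StronglyConnectedM {m : ℕ} (M : Matrix (Fin m) (Fin m) ℝ) : Prop :=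
  ∀ i j : Fin m, Relation.ReflTransGen (edgeM M) i j

theorem mul_sub_sq_nonneg_of_offDiag_nonneg {ι : Type*} {A : Matrix ι ι ℝ}
    (h_offdiag : ∀ i j, i ≠ j → 0 ≤ A i j) (y : ι → ℝ) (i j : ι) :
    0 ≤ A i j * (y i - y j) ^ 2 := by
  rcases eq_or_ne i j with rfl | hij
  · simp
  · exact mul_nonneg (h_offdiag i j hij) (sq_nonneg _)

section QuadraticForm

variable {ι : Type*} [Fintype ι]

theorem two_mul_dotProduct_mulVec_eq_neg_sum_mul_sub_sq {R : Type*} [CommRing R]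
    (A : Matrix ι ι R) (h_row : ∀ i, ∑ j, A i j = 0) (h_col : ∀ j, ∑ i, A i j = 0)
    (y : ι → R) :
    2 * (y ⬝ᵥ A *ᵥ y) = -∑ i, ∑ j, A i j * (y i - y j) ^ 2 := by
  have h_left : ∑ i, ∑ j, A i j * y i ^ 2 = 0 := by
    simp [← Finset.sum_mul, h_row]
  have h_right : ∑ i, ∑ j, A i j * y j ^ 2 = 0 := by
    rw [Finset.sum_comm]
    simp [← Finset.sum_mul, h_col]
  have h_expand : ∑ i, ∑ j, A i j * (y i - y j) ^ 2 =
      ∑ i, ∑ j, A i j * y i ^ 2 + ∑ i, ∑ j, A i j * y j ^ 2 -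
        2 * ∑ i, ∑ j, y i * (A i j * y j) := by
    simp only [Finset.mul_sum, ← Finset.sum_add_distrib, ← Finset.sum_sub_distrib]
    exact Fintype.sum_congr _ _ fun i => Fintype.sum_congr _ _ fun j => by ring
  rw [h_expand, h_left, h_right]
  simp [dotProduct, mulVec, Finset.mul_sum]

variable {A : Matrix ι ι ℝ}

theorem dotProduct_mulVec_nonpos_of_offDiag_nonneg (h_offdiag : ∀ i j, i ≠ j → 0 ≤ A i j)
    (h_row : ∀ i, ∑ j, A i j = 0) (h_col : ∀ j, ∑ i, A i j = 0) (y : ι → ℝ) :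
    y ⬝ᵥ A *ᵥ y ≤ 0 := by
  have h := two_mul_dotProduct_mulVec_eq_neg_sum_mul_sub_sq A h_row h_col y
  have : 0 ≤ ∑ i, ∑ j, A i j * (y i - y j) ^ 2 :=
    Fintype.sum_nonneg fun i => Fintype.sum_nonneg fun j =>
      mul_sub_sq_nonneg_of_offDiag_nonneg h_offdiag y i j
  linarith

theorem eq_of_dotProduct_mulVec_eq_zero (h_offdiag : ∀ i j, i ≠ j → 0 ≤ A i j)
    (h_row : ∀ i, ∑ j, A i j = 0) (h_col : ∀ j, ∑ i, A i j = 0) {y : ι → ℝ}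
    (hy : y ⬝ᵥ A *ᵥ y = 0) {i j : ι} (hij : 0 < A i j) : y i = y j := by
  have h_sum : ∑ i, ∑ j, A i j * (y i - y j) ^ 2 = 0 := by
    linarith [two_mul_dotProduct_mulVec_eq_neg_sum_mul_sub_sq A h_row h_col y]
  have h_nonneg := mul_sub_sq_nonneg_of_offDiag_nonneg h_offdiag y
  rw [Fintype.sum_eq_zero_iff_of_nonneg fun i => Fintype.sum_nonneg (h_nonneg i)] at h_sum
  have h_term := (Fintype.sum_eq_zero_iff_of_nonneg (h_nonneg i)).mp (congrFun h_sum i)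
  have : (y i - y j) ^ 2 = 0 := (mul_eq_zero.mp (congrFun h_term j)).resolve_left hij.ne'
  exact sub_eq_zero.mp (pow_eq_zero_iff two_ne_zero |>.mp this)

end QuadraticForm

theorem dotProduct_diagonal_mulVec {ι R : Type*} [Fintype ι] [DecidableEq ι] [CommSemiring R]
    (e y : ι → R) : y ⬝ᵥ diagonal e *ᵥ y = ∑ i, e i * y i ^ 2 := by
  simp only [dotProduct, mulVec_diagonal]
  exact Fintype.sum_congr _ _ fun i => by ring

theorem StronglyConnectedM.eq_of_forall_pos_imp_eq {m : ℕ} {M : Matrix (Fin m) (Fin m) ℝ}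
    (hM : StronglyConnectedM M) {β : Type*} {y : Fin m → β}
    (hy : ∀ i j, 0 < M i j → y i = y j) (i j : Fin m) : y i = y j := by
  induction hM i j with
  | refl => rfl
  | tail _ h_edge ih => exact ih.trans (hy _ _ h_edge.2).symm

theorem xi_block_negative_definite_general
    {m : ℕ}
    (Lt : Matrix (Fin m) (Fin m) ℝ)
    (h_offdiag : ∀ i j, i ≠ j → 0 ≤ Lt i j)
    (h_rowsum : ∀ i, ∑ j, Lt i j = 0)
    (h_irred : StronglyConnectedM Lt)
    (ξ : Fin m → ℝ)
    (hξ_pos : ∀ i, 0 < ξ i)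
    (hξL : ξ ᵥ* Lt = 0)
    (d : Fin m → ℝ)
    (hd_nonpos : ∀ i, d i ≤ 0)
    (hd_neg : ∃ i, d i < 0) :
    ∀ y : Fin m → ℝ, y ≠ 0 →
      y ⬝ᵥ ((Matrix.diagonal ξ * (Lt + Matrix.diagonal d)) *ᵥ y) < 0 := by
  intro y hy
  set A := diagonal ξ * Lt
  have hA_offdiag (i j) (hij : i ≠ j) : 0 ≤ A i j := by
    simpa [A] using mul_nonneg (hξ_pos i).le (h_offdiag i j hij)
  have hA_row (i) : ∑ j, A i j = 0 := by simp [A, ← Finset.mul_sum, h_rowsum]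
  have hA_pos {i j} (hij : 0 < Lt i j) : 0 < A i j := by
    simpa [A] using mul_pos (hξ_pos i) hij
  have hA_col (j) : ∑ i, A i j = 0 := by simpa [A, vecMul, dotProduct] using congrFun hξL j
  have h_split : y ⬝ᵥ (diagonal ξ * (Lt + diagonal d)) *ᵥ y =
      y ⬝ᵥ A *ᵥ y + ∑ i, ξ i * d i * y i ^ 2 := by
    rw [mul_add, diagonal_mul_diagonal, add_mulVec, dotProduct_add, dotProduct_diagonal_mulVec]
  have hA_nonpos := dotProduct_mulVec_nonpos_of_offDiag_nonneg hA_offdiag hA_row hA_col y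
  have hD_term_nonpos (i) : ξ i * d i * y i ^ 2 ≤ 0 :=
    mul_nonpos_of_nonpos_of_nonneg (mul_nonpos_of_nonneg_of_nonpos (hξ_pos i).le (hd_nonpos i))
      (sq_nonneg _)
  rw [h_split]
  by_contra! h_nonneg
  have hD_nonpos := Fintype.sum_nonpos hD_term_nonpos
  have hA_zero : y ⬝ᵥ A *ᵥ y = 0 := by linarith
  have hD_zero : ∑ i, ξ i * d i * y i ^ 2 = 0 := by linarith
  have h_const := h_irred.eq_of_forall_pos_imp_eq fun i j hij =>
    eq_of_dotProduct_mulVec_eq_zero hA_offdiag hA_row hA_col hA_zero (hA_pos hij)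
  obtain ⟨i₀, hi₀⟩ := hd_neg
  have hy_i₀ : y i₀ = 0 := by
    have := congrFun ((Fintype.sum_eq_zero_iff_of_nonpos hD_term_nonpos).mp hD_zero) i₀
    simpa [(hξ_pos i₀).ne', hi₀.ne] using this
  exact hy (funext fun k => (h_const k i₀).trans hy_i₀)

/-- If `L̃` is an irreducible Laplacian with positive left null vector `ξ`, and `D` is a
diagonal negative semidefinite matrix with at least one strictly negative entry, then
`Ξ(L̃ + D)` is negative definite: `yᵀ Ξ (L̃ + D) y < 0` for all `y ≠ 0`. -/
theorem xi_block_negative_definite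
    {m : ℕ} [NeZero m]
    (Lt : Matrix (Fin m) (Fin m) ℝ)
    (h_offdiag : ∀ i j, i ≠ j → 0 ≤ Lt i j)
    (h_rowsum : ∀ i, ∑ j, Lt i j = 0)
    (h_irred : StronglyConnectedM Lt)
    (ξ : Fin m → ℝ)
    (hξ_pos : ∀ i, 0 < ξ i)
    (hξL : ξ ᵥ* Lt = 0)
    (hξ_sum : ∑ i, ξ i = 1)
    (d : Fin m → ℝ)
    (hd_nonpos : ∀ i, d i ≤ 0)
    (hd_neg : ∃ i, d i < 0) :
    ∀ y : Fin m → ℝ, y ≠ 0 →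
      y ⬝ᵥ ((Matrix.diagonal ξ * (Lt + Matrix.diagonal d)) *ᵥ y) < 0 :=
  xi_block_negative_definite_general Lt h_offdiag h_rowsum h_irred ξ hξ_pos hξL d hd_nonpos hd_neg
end

section
/- Let L be the irreducible Laplacian of a strongly connected weighted digraph, ξ > 0 with ξᵀL = 0, ∑ξᵢ = 1, Ξ = diag(ξ), R = (1/2)(ΞL + LᵀΞ). Consider ẋ(t) = Lx(t_k) on [t_k, t_{k+1}) and V(t) = (1/2)(x(t) − x̄𝟏)ᵀΞ(x(t) − x̄𝟏) with x̄ = ξᵀx(0). Then for any a > 0 and t ∈ [t_k, t_{k+1}): dV/dt ≤ −(1 − aβ_m/(2λ₂)) xᵀ(t)(−R)x(t) + (1/(2a))‖x(t_k) − x(t)‖², where λ₂ is the smallest positive eigenvalue of −R and β_m is the largest eigenvalue of ΞLLᵀΞ. -/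
open Matrix

/-!
Along the held input, `dV/dt = (x - x̄𝟏)ᵀ Ξ L x(t_k)`, and the `x̄𝟏` part drops out because
`ξᵀL = 0`. With `B = ΞL` and `x(t_k) = x + e` this is `xᵀBx + (Bᵀx)ᵀe = -xᵀ(-R)x + (Bᵀx)ᵀe`,
and Young's inequality bounds the cross term by `(a/2) xᵀQx + (1/(2a))‖e‖²`, as `Q = BBᵀ`.
It remains to show `λ₂ xᵀQx ≤ β_m xᵀ(-R)x`. Both forms vanish on constants, so `x` may be
replaced by its mean-zero part, which is orthogonal to `ker(-R)`: by strong connectivity that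
kernel consists of the constants. There the Rayleigh bounds `xᵀQx ≤ β_m‖x‖²` and
`λ₂‖x‖² ≤ xᵀ(-R)x` apply.
-/

theorem OrthonormalBasis.sum_dotProduct_mul_dotProduct {ι n : Type*} [Fintype ι] [Fintype n]
    (b : OrthonormalBasis ι ℝ (EuclideanSpace ℝ n)) (y z : n → ℝ) :
    ∑ i, (⇑(b i) ⬝ᵥ y) * (⇑(b i) ⬝ᵥ z) = y ⬝ᵥ z := by
  have h := b.sum_inner_mul_inner (WithLp.toLp 2 y) (WithLp.toLp 2 z)
  simp only [EuclideanSpace.inner_eq_star_dotProduct, star_trivial] at h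
  rw [dotProduct_comm z y] at h
  simpa only [dotProduct_comm z] using h

namespace Matrix

section Quadratic

variable {n : Type*} [Fintype n]

theorem dotProduct_le_young (p e : n → ℝ) {a : ℝ} (ha : 0 < a) :
    p ⬝ᵥ e ≤ a / 2 * (p ⬝ᵥ p) + 1 / (2 * a) * (e ⬝ᵥ e) := by
  simp only [dotProduct, Finset.mul_sum, ← Finset.sum_add_distrib]
  refine Finset.sum_le_sum fun i _ => ?_
  have key : 0 ≤ (a * p i - e i) ^ 2 / (2 * a) := by positivity
  have expand : (a * p i - e i) ^ 2 / (2 * a)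
      = a / 2 * (p i * p i) + 1 / (2 * a) * (e i * e i) - p i * e i := by
    field_simp; ring
  linarith

theorem dotProduct_mulVec_le_young (B : Matrix n n ℝ) (z w : n → ℝ) {a : ℝ} (ha : 0 < a) :
    z ⬝ᵥ (B *ᵥ w) ≤ z ⬝ᵥ (B *ᵥ z) + a / 2 * (z ⬝ᵥ ((B * Bᵀ) *ᵥ z))
      + 1 / (2 * a) * ((w - z) ⬝ᵥ (w - z)) := by
  have split : z ⬝ᵥ (B *ᵥ w) = z ⬝ᵥ (B *ᵥ z) + (Bᵀ *ᵥ z) ⬝ᵥ (w - z) := by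
    rw [mulVec_transpose, ← dotProduct_mulVec, ← dotProduct_add, ← mulVec_add,
      add_sub_cancel]
  have gram : (Bᵀ *ᵥ z) ⬝ᵥ (Bᵀ *ᵥ z) = z ⬝ᵥ ((B * Bᵀ) *ᵥ z) := by
    rw [← mulVec_mulVec, dotProduct_mulVec z B, mulVec_transpose]
  rw [split, ← gram]
  linarith [dotProduct_le_young (Bᵀ *ᵥ z) (w - z) ha]

theorem dotProduct_half_smul_add_transpose_mulVec (B : Matrix n n ℝ) (v : n → ℝ) :
    v ⬝ᵥ (((1 / 2 : ℝ) • (B + Bᵀ)) *ᵥ v) = v ⬝ᵥ (B *ᵥ v) := by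
  rw [smul_mulVec, add_mulVec, dotProduct_smul, dotProduct_add, mulVec_transpose,
    dotProduct_comm v (v ᵥ* B), ← dotProduct_mulVec, smul_eq_mul]
  ring

theorem dotProduct_mulVec_sub_of_mulVec_eq_zero {M : Matrix n n ℝ} (hM : M.IsSymm) {u : n → ℝ}
    (hu : M *ᵥ u = 0) (z : n → ℝ) :
    (z - u) ⬝ᵥ (M *ᵥ (z - u)) = z ⬝ᵥ (M *ᵥ z) := by
  have hu' : u ⬝ᵥ (M *ᵥ z) = 0 := by
    rw [dotProduct_mulVec, ← mulVec_transpose, hM.eq, hu, zero_dotProduct]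
  rw [mulVec_sub, hu, sub_zero, sub_dotProduct, hu', sub_zero]

theorem dotProduct_sub_mean_eq_zero {v : n → ℝ} (hv : ∀ i j, v i = v j) (z : n → ℝ) :
    v ⬝ᵥ (z - fun _ => (∑ j, z j) / Fintype.card n) = 0 := by
  rcases isEmpty_or_nonempty n with hn | hn
  · simp [dotProduct]
  obtain ⟨i₀⟩ := id hn
  have hconst : v = fun _ => v i₀ := funext fun i => hv i i₀
  rw [hconst]
  simp only [dotProduct, Pi.sub_apply, ← Finset.mul_sum]
  rw [Finset.sum_sub_distrib, Finset.sum_const, Finset.card_univ, nsmul_eq_mul,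
    mul_div_cancel₀ _ (Nat.cast_ne_zero.mpr Fintype.card_ne_zero), sub_self, mul_zero]

end Quadratic

section Spectral

variable {n : Type*} [Fintype n] [DecidableEq n] {M : Matrix n n ℝ}

theorem IsHermitian.dotProduct_mulVec_eq_sum_eigenvalues (hM : M.IsHermitian) (y : n → ℝ) :
    y ⬝ᵥ (M *ᵥ y) = ∑ i, hM.eigenvalues i * (⇑(hM.eigenvectorBasis i) ⬝ᵥ y) ^ 2 := by
  rw [← hM.eigenvectorBasis.sum_dotProduct_mul_dotProduct]
  refine Finset.sum_congr rfl fun i _ => ?_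
  rw [dotProduct_mulVec, ← mulVec_transpose, (isHermitian_iff_isSymm.mp hM).eq,
    hM.mulVec_eigenvectorBasis, smul_dotProduct, smul_eq_mul]
  ring

theorem IsHermitian.dotProduct_mulVec_le_of_spectrum_le (hM : M.IsHermitian) {β : ℝ}
    (hβ : ∀ μ ∈ spectrum ℝ M, μ ≤ β) (y : n → ℝ) :
    y ⬝ᵥ (M *ᵥ y) ≤ β * (y ⬝ᵥ y) := by
  rw [hM.dotProduct_mulVec_eq_sum_eigenvalues, ← hM.eigenvectorBasis.sum_dotProduct_mul_dotProduct,
    Finset.mul_sum]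
  refine Finset.sum_le_sum fun i _ => ?_
  rw [← sq]
  exact mul_le_mul_of_nonneg_right (hβ _ (hM.eigenvalues_mem_spectrum_real i)) (sq_nonneg _)

theorem PosSemidef.le_dotProduct_mulVec_of_orthogonal_ker (hM : M.PosSemidef) {lam : ℝ}
    (hlam : ∀ μ ∈ spectrum ℝ M, 0 < μ → lam ≤ μ) {y : n → ℝ}
    (hy : ∀ v, M *ᵥ v = 0 → v ⬝ᵥ y = 0) :
    lam * (y ⬝ᵥ y) ≤ y ⬝ᵥ (M *ᵥ y) := by
  rw [hM.1.dotProduct_mulVec_eq_sum_eigenvalues,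
    ← hM.1.eigenvectorBasis.sum_dotProduct_mul_dotProduct, Finset.mul_sum]
  refine Finset.sum_le_sum fun i _ => ?_
  rw [← sq]
  rcases (hM.eigenvalues_nonneg i).eq_or_lt with hzero | hpos
  · have hker : M *ᵥ ⇑(hM.1.eigenvectorBasis i) = 0 := by
      rw [hM.1.mulVec_eigenvectorBasis, ← hzero, zero_smul]
    rw [hy _ hker, ← hzero]
    simp
  · exact mul_le_mul_of_nonneg_right (hlam _ (hM.1.eigenvalues_mem_spectrum_real i) hpos)
      (sq_nonneg _)

theorem PosSemidef.mul_dotProduct_mulVec_le {N Q : Matrix n n ℝ} (hN : N.PosSemidef)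
    (hQ : Q.IsHermitian) {lam β : ℝ} (hlam₀ : 0 ≤ lam)
    (hlam : ∀ μ ∈ spectrum ℝ N, 0 < μ → lam ≤ μ) (hβ₀ : 0 ≤ β)
    (hβ : ∀ μ ∈ spectrum ℝ Q, μ ≤ β) {u z : n → ℝ} (hNu : N *ᵥ u = 0) (hQu : Q *ᵥ u = 0)
    (hz : ∀ v, N *ᵥ v = 0 → v ⬝ᵥ (z - u) = 0) :
    lam * (z ⬝ᵥ (Q *ᵥ z)) ≤ β * (z ⬝ᵥ (N *ᵥ z)) := by
  rw [← dotProduct_mulVec_sub_of_mulVec_eq_zero (isHermitian_iff_isSymm.mp hQ) hQu,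
    ← dotProduct_mulVec_sub_of_mulVec_eq_zero (isHermitian_iff_isSymm.mp hN.1) hNu]
  calc lam * ((z - u) ⬝ᵥ (Q *ᵥ (z - u)))
      ≤ lam * (β * ((z - u) ⬝ᵥ (z - u))) :=
        mul_le_mul_of_nonneg_left (hQ.dotProduct_mulVec_le_of_spectrum_le hβ _) hlam₀
    _ = β * (lam * ((z - u) ⬝ᵥ (z - u))) := by ring
    _ ≤ β * ((z - u) ⬝ᵥ (N *ᵥ (z - u))) :=
        mul_le_mul_of_nonneg_left (hN.le_dotProduct_mulVec_of_orthogonal_ker hlam hz) hβ₀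

theorem PosSemidef.nonneg_of_mem_spectrum (hM : M.PosSemidef) {μ : ℝ} (hμ : μ ∈ spectrum ℝ M) :
    0 ≤ μ := by
  obtain ⟨i, rfl⟩ := hM.1.spectrum_real_eq_range_eigenvalues ▸ hμ
  exact hM.eigenvalues_nonneg i

end Spectral

section Laplacian

variable {n : Type*} [Fintype n] [DecidableEq n] {A L : Matrix n n ℝ} {ξ : n → ℝ}

theorem diagonal_mul_laplacian_mulVec_const (hL : L = A - diagonal fun i => ∑ j, A i j)
    (c : ℝ) : (diagonal ξ * L) *ᵥ (fun _ => c) = 0 := by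
  have hLc : L *ᵥ (fun _ => c) = 0 := by
    ext i
    rw [hL, sub_mulVec, Pi.sub_apply, mulVec_diagonal]
    simp [mulVec, dotProduct, Finset.sum_mul]
  rw [← mulVec_mulVec, hLc, mulVec_zero]

theorem const_vecMul_diagonal_mul_laplacian (hξL : ξ ᵥ* L = 0) (c : ℝ) :
    (fun _ => c) ᵥ* (diagonal ξ * L) = 0 := by
  have hcξ : (fun _ => c) ᵥ* diagonal ξ = c • ξ := by
    ext i
    simp [vecMul_diagonal]
  rw [← vecMul_vecMul, hcξ, smul_vecMul, hξL, smul_zero]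

theorem half_smul_add_transpose_diagonal_mul_laplacian_mulVec_const
    (hL : L = A - diagonal fun i => ∑ j, A i j) (hξL : ξ ᵥ* L = 0) (c : ℝ) :
    ((1 / 2 : ℝ) • (diagonal ξ * L + (diagonal ξ * L)ᵀ)) *ᵥ (fun _ => c) = 0 := by
  rw [smul_mulVec, add_mulVec, mulVec_transpose, diagonal_mul_laplacian_mulVec_const hL,
    const_vecMul_diagonal_mul_laplacian hξL, add_zero, smul_zero]

theorem mul_transpose_diagonal_mul_laplacian_mulVec_const (hξL : ξ ᵥ* L = 0) (c : ℝ) :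
    ((diagonal ξ * L) * (diagonal ξ * L)ᵀ) *ᵥ (fun _ => c) = 0 := by
  rw [← mulVec_mulVec, mulVec_transpose, const_vecMul_diagonal_mul_laplacian hξL, mulVec_zero]

theorem sum_mul_apply_eq_of_vecMul_laplacian_eq_zero
    (hL : L = A - diagonal fun i => ∑ j, A i j) (hξL : ξ ᵥ* L = 0) (j : n) :
    ∑ i, ξ i * A i j = ξ j * ∑ k, A j k := by
  have h := congrFun hξL j
  simp only [hL, vecMul, dotProduct, Matrix.sub_apply, diagonal_apply, mul_sub,
    Finset.sum_sub_distrib, mul_ite, mul_zero, Finset.sum_ite_eq', Finset.mem_univ, if_true,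
    Pi.zero_apply] at h
  linarith

/-- Since `ξᵀL = 0` gives `∑ᵢ ξᵢ Aᵢⱼ = ξⱼ ∑ₖ Aⱼₖ`, the diagonal part of the form splits evenly
between the two endpoints of each edge. -/
theorem dotProduct_diagonal_mul_laplacian_mulVec
    (hL : L = A - diagonal fun i => ∑ j, A i j) (hξL : ξ ᵥ* L = 0) (v : n → ℝ) :
    v ⬝ᵥ ((diagonal ξ * L) *ᵥ v) = -(1 / 2) * ∑ i, ∑ j, ξ i * A i j * (v i - v j) ^ 2 := by
  have hswap : ∑ i, ∑ j, ξ i * A i j * v j ^ 2 = ∑ i, ∑ j, ξ i * A i j * v i ^ 2 := by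
    rw [Finset.sum_comm]
    refine Finset.sum_congr rfl fun j _ => ?_
    rw [← Finset.sum_mul, sum_mul_apply_eq_of_vecMul_laplacian_eq_zero hL hξL j, Finset.mul_sum,
      Finset.sum_mul]
  have hlhs : v ⬝ᵥ ((diagonal ξ * L) *ᵥ v) = ∑ i, ∑ j, ξ i * A i j * (v i * v j - v i ^ 2) := by
    rw [hL, ← mulVec_mulVec, dotProduct]
    simp only [mulVec_diagonal, sub_mulVec, Pi.sub_apply]
    simp only [mulVec, dotProduct, Finset.sum_mul, Finset.mul_sum, ← Finset.sum_sub_distrib]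
    exact Finset.sum_congr rfl fun i _ => Finset.sum_congr rfl fun j _ => by ring
  have hsq : ∀ i j, ξ i * A i j * (v i - v j) ^ 2 = 2 * (ξ i * A i j * (v i ^ 2 - v i * v j))
      + (ξ i * A i j * v j ^ 2 - ξ i * A i j * v i ^ 2) := fun i j => by ring
  rw [hlhs]
  simp only [hsq, Finset.sum_add_distrib, Finset.sum_sub_distrib, hswap, sub_self, add_zero,
    Finset.mul_sum]
  exact Finset.sum_congr rfl fun i _ => Finset.sum_congr rfl fun j _ => by ring

theorem posSemidef_neg_half_smul_add_transpose (hL : L = A - diagonal fun i => ∑ j, A i j)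
    (hξL : ξ ᵥ* L = 0) (hA : ∀ i j, 0 ≤ A i j) (hξ : ∀ i, 0 ≤ ξ i) :
    (-((1 / 2 : ℝ) • (diagonal ξ * L + (diagonal ξ * L)ᵀ))).PosSemidef := by
  refine PosSemidef.of_dotProduct_mulVec_nonneg
    (isHermitian_iff_isSymm.mpr ((isSymm_add_transpose_self _).smul _).neg) fun v => ?_
  rw [star_trivial, neg_mulVec, dotProduct_neg, dotProduct_half_smul_add_transpose_mulVec,
    dotProduct_diagonal_mul_laplacian_mulVec hL hξL, neg_mul, neg_neg]
  exact mul_nonneg (by norm_num) <| Finset.sum_nonneg fun i _ => Finset.sum_nonneg fun j _ =>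
    mul_nonneg (mul_nonneg (hξ i) (hA i j)) (sq_nonneg _)

end Laplacian

end Matrix

section Derivative

variable {n : Type*} [Fintype n] {t : ℝ}

theorem HasDerivAt.dotProduct {f g : ℝ → n → ℝ} {f' g' : n → ℝ} (hf : HasDerivAt f f' t)
    (hg : HasDerivAt g g' t) :
    HasDerivAt (fun s => f s ⬝ᵥ g s) (f' ⬝ᵥ g t + f t ⬝ᵥ g') t := by
  simp only [_root_.dotProduct, ← Finset.sum_add_distrib]
  exact HasDerivAt.fun_sum fun i _ => (hasDerivAt_pi.mp hf i).mul (hasDerivAt_pi.mp hg i)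

theorem HasDerivAt.mulVec {m : Type*} (M : Matrix m n ℝ) {f : ℝ → n → ℝ} {f' : n → ℝ}
    (hf : HasDerivAt f f' t) : HasDerivAt (fun s => M *ᵥ f s) (M *ᵥ f') t :=
  hasDerivAt_pi.mpr fun i => by
    simpa [Matrix.mulVec] using (hasDerivAt_const t fun j => M i j).dotProduct hf

theorem HasDerivAt.half_dotProduct_mulVec_sub {M : Matrix n n ℝ} (hM : M.IsSymm)
    {x : ℝ → n → ℝ} {x' : n → ℝ} (hx : HasDerivAt x x' t) (c : n → ℝ) :
    HasDerivAt (fun s => (1 / 2 : ℝ) * ((x s - c) ⬝ᵥ (M *ᵥ (x s - c))))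
      ((x t - c) ⬝ᵥ (M *ᵥ x')) t := by
  have hxc : HasDerivAt (fun s => x s - c) x' t := hx.sub_const c
  refine ((hxc.dotProduct (hxc.mulVec M)).const_mul (1 / 2 : ℝ)).congr_deriv ?_
  rw [dotProduct_mulVec, ← mulVec_transpose, hM.eq, dotProduct_comm]
  ring

end Derivative

theorem StronglyConnected.apply_eq {m : ℕ} {A : Matrix (Fin m) (Fin m) ℝ}
    (hSC : StronglyConnected A) {v : Fin m → ℝ} (hv : ∀ i j, 0 < A i j → v i = v j)
    (i j : Fin m) : v i = v j := by
  induction hSC i j with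
  | refl => rfl
  | tail _ hedge ih => exact ih.trans (hv _ _ hedge).symm

theorem StronglyConnected.apply_eq_of_mulVec_eq_zero {m : ℕ} {A L : Matrix (Fin m) (Fin m) ℝ}
    {ξ : Fin m → ℝ} (hSC : StronglyConnected A) (hL : L = A - diagonal fun i => ∑ j, A i j)
    (hξL : ξ ᵥ* L = 0) (hA : ∀ i j, 0 ≤ A i j) (hξ : ∀ i, 0 < ξ i) {v : Fin m → ℝ}
    (hv : (-((1 / 2 : ℝ) • (diagonal ξ * L + (diagonal ξ * L)ᵀ))) *ᵥ v = 0) (i j : Fin m) :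
    v i = v j := by
  have hterm_nonneg : ∀ i j, 0 ≤ ξ i * A i j * (v i - v j) ^ 2 := fun i j =>
    mul_nonneg (mul_nonneg (hξ i).le (hA i j)) (sq_nonneg _)
  have hsum : ∑ i, ∑ j, ξ i * A i j * (v i - v j) ^ 2 = 0 := by
    have h := congrArg (v ⬝ᵥ ·) hv
    simp only [neg_mulVec, dotProduct_neg, dotProduct_half_smul_add_transpose_mulVec,
      dotProduct_diagonal_mul_laplacian_mulVec hL hξL, dotProduct_zero] at h
    linarith
  have hterm : ∀ i j, ξ i * A i j * (v i - v j) ^ 2 = 0 := fun i j =>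
    (Finset.sum_eq_zero_iff_of_nonneg fun j _ => hterm_nonneg i j).mp
      ((Finset.sum_eq_zero_iff_of_nonneg fun i _ =>
        Finset.sum_nonneg fun j _ => hterm_nonneg i j).mp hsum i (Finset.mem_univ i))
      j (Finset.mem_univ j)
  refine hSC.apply_eq (fun i j hij => ?_) i j
  have := hterm i j
  rw [mul_eq_zero, or_iff_right (mul_pos (hξ i) hij).ne', sq_eq_zero_iff, sub_eq_zero] at this
  exact this

theorem StronglyConnected.mul_dotProduct_mulVec_le {m : ℕ} {A L : Matrix (Fin m) (Fin m) ℝ}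
    {ξ : Fin m → ℝ} (hSC : StronglyConnected A) (hL : L = A - diagonal fun i => ∑ j, A i j)
    (hξL : ξ ᵥ* L = 0) (hA : ∀ i j, 0 ≤ A i j) (hξ : ∀ i, 0 < ξ i) {lam β : ℝ} (hlam₀ : 0 ≤ lam)
    (hlam : ∀ μ ∈ spectrum ℝ (-((1 / 2 : ℝ) • (diagonal ξ * L + (diagonal ξ * L)ᵀ))),
      0 < μ → lam ≤ μ)
    (hβ_mem : β ∈ spectrum ℝ (diagonal ξ * L * (diagonal ξ * L)ᵀ))
    (hβ : ∀ μ ∈ spectrum ℝ (diagonal ξ * L * (diagonal ξ * L)ᵀ), μ ≤ β) (z : Fin m → ℝ) :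
    lam * (z ⬝ᵥ ((diagonal ξ * L * (diagonal ξ * L)ᵀ) *ᵥ z))
      ≤ β * (z ⬝ᵥ ((-((1 / 2 : ℝ) • (diagonal ξ * L + (diagonal ξ * L)ᵀ))) *ᵥ z)) := by
  have hQ : (diagonal ξ * L * (diagonal ξ * L)ᵀ).PosSemidef := by
    simpa only [conjTranspose_eq_transpose_of_trivial] using
      posSemidef_self_mul_conjTranspose (diagonal ξ * L)
  have hN := posSemidef_neg_half_smul_add_transpose hL hξL hA fun i => (hξ i).le
  refine hN.mul_dotProduct_mulVec_le hQ.1 hlam₀ hlam (hQ.nonneg_of_mem_spectrum hβ_mem) hβ ?_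
    (mul_transpose_diagonal_mul_laplacian_mulVec_const hξL _)
    fun v hv => dotProduct_sub_mean_eq_zero (hSC.apply_eq_of_mulVec_eq_zero hL hξL hA hξ hv) z
  rw [neg_mulVec, half_smul_add_transpose_diagonal_mul_laplacian_mulVec_const hL hξL, neg_zero]

theorem lyapunov_derivative_bound_general
    {m : ℕ}
    (A D L : Matrix (Fin m) (Fin m) ℝ)
    (hA_nonneg : ∀ i j, 0 ≤ A i j)
    (hD : D = Matrix.diagonal (fun i => ∑ j, A i j)) (hL : L = A - D)
    (hSC : StronglyConnected A)
    (ξ : Fin m → ℝ) (hξ_pos : ∀ i, 0 < ξ i) (hξL : ξ ᵥ* L = 0)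
    (R Q : Matrix (Fin m) (Fin m) ℝ)
    (hR : R = (1/2 : ℝ) • (Matrix.diagonal ξ * L + Lᵀ * Matrix.diagonal ξ))
    (hQ : Q = Matrix.diagonal ξ * L * Lᵀ * Matrix.diagonal ξ)
    (lam₂ betam : ℝ)
    (hlam₂_pos : 0 < lam₂)
    (hlam₂_min : ∀ μ ∈ spectrum ℝ (-R), 0 < μ → lam₂ ≤ μ)
    (hbetam_mem : betam ∈ spectrum ℝ Q)
    (hbetam_max : ∀ μ ∈ spectrum ℝ Q, μ ≤ betam)
    (tk tk1 : ℝ)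
    (x : ℝ → Fin m → ℝ)
    (hx : ∀ t ∈ Set.Ico tk tk1, HasDerivAt x (L *ᵥ x tk) t)
    (V : ℝ → ℝ)
    (hV : V = fun t => (1/2 : ℝ) *
      ((x t - fun _ => ξ ⬝ᵥ x 0) ⬝ᵥ (Matrix.diagonal ξ *ᵥ (x t - fun _ => ξ ⬝ᵥ x 0)))) :
    ∀ a : ℝ, 0 < a → ∀ t ∈ Set.Ico tk tk1,
      ∃ v : ℝ, HasDerivAt V v t ∧
        v ≤ -(1 - a * betam / (2 * lam₂)) * (x t ⬝ᵥ ((-R) *ᵥ x t))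
            + (1 / (2 * a)) * ((x tk - x t) ⬝ᵥ (x tk - x t)) := by
  intro a ha t ht
  subst hV
  rw [hD] at hL
  replace hR : R = (1 / 2 : ℝ) • (diagonal ξ * L + (diagonal ξ * L)ᵀ) := by
    rw [hR, transpose_mul, diagonal_transpose]
  replace hQ : Q = diagonal ξ * L * (diagonal ξ * L)ᵀ := by
    rw [hQ, transpose_mul, diagonal_transpose, Matrix.mul_assoc]
  have hkey : lam₂ * (x t ⬝ᵥ (Q *ᵥ x t)) ≤ betam * (x t ⬝ᵥ ((-R) *ᵥ x t)) := by
    subst hR hQ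
    exact hSC.mul_dotProduct_mulVec_le hL hξL hA_nonneg hξ_pos hlam₂_pos.le hlam₂_min
      hbetam_mem hbetam_max (x t)
  have hBN : x t ⬝ᵥ ((diagonal ξ * L) *ᵥ x t) = -(x t ⬝ᵥ ((-R) *ᵥ x t)) := by
    rw [hR, neg_mulVec, dotProduct_neg, dotProduct_half_smul_add_transpose_mulVec, neg_neg]
  have hyoung := dotProduct_mulVec_le_young (diagonal ξ * L) (x t) (x tk) ha
  rw [hBN, ← hQ] at hyoung
  refine ⟨_, (hx t ht).half_dotProduct_mulVec_sub (isSymm_diagonal ξ) _, ?_⟩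
  rw [mulVec_mulVec, sub_dotProduct, dotProduct_mulVec (fun _ => ξ ⬝ᵥ x 0),
    const_vecMul_diagonal_mul_laplacian hξL, zero_dotProduct, sub_zero]
  set N := x t ⬝ᵥ ((-R) *ᵥ x t)
  set q := x t ⬝ᵥ (Q *ᵥ x t)
  have hq : a / 2 * q ≤ a * betam / (2 * lam₂) * N :=
    calc a / 2 * q = a / (2 * lam₂) * (lam₂ * q) := by field_simp
      _ ≤ a / (2 * lam₂) * (betam * N) := by gcongr
      _ = a * betam / (2 * lam₂) * N := by ring
  linarith

/-- Derivative bound on the Lyapunov function `V(t) = ½(x(t) - x̄𝟏)ᵀΞ(x(t) - x̄𝟏)` along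
the zero-order-hold dynamics `ẋ = L x(t_k)` on `[t_k, t_{k+1})`: for any `a > 0`,
`dV/dt ≤ -(1 - aβ_m/(2λ₂)) xᵀ(t)(-R)x(t) + (1/(2a))‖x(t_k) - x(t)‖²`. -/
theorem lyapunov_derivative_bound
    {m : ℕ} [NeZero m]
    (A D L : Matrix (Fin m) (Fin m) ℝ)
    (hA_nonneg : ∀ i j, 0 ≤ A i j) (hA_diag : ∀ i, A i i = 0)
    (hD : D = Matrix.diagonal (fun i => ∑ j, A i j)) (hL : L = A - D)
    (hSC : StronglyConnected A)
    (ξ : Fin m → ℝ) (hξ_pos : ∀ i, 0 < ξ i) (hξL : ξ ᵥ* L = 0) (hξ_sum : ∑ i, ξ i = 1)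
    (R Q : Matrix (Fin m) (Fin m) ℝ)
    (hR : R = (1/2 : ℝ) • (Matrix.diagonal ξ * L + Lᵀ * Matrix.diagonal ξ))
    (hQ : Q = Matrix.diagonal ξ * L * Lᵀ * Matrix.diagonal ξ)
    (lam₂ betam : ℝ)
    (hlam₂_mem : lam₂ ∈ spectrum ℝ (-R)) (hlam₂_pos : 0 < lam₂)
    (hlam₂_min : ∀ μ ∈ spectrum ℝ (-R), 0 < μ → lam₂ ≤ μ)
    (hbetam_mem : betam ∈ spectrum ℝ Q)
    (hbetam_max : ∀ μ ∈ spectrum ℝ Q, μ ≤ betam)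
    (tk tk1 : ℝ) (htk : tk < tk1)
    (x : ℝ → Fin m → ℝ)
    (hx : ∀ t ∈ Set.Ico tk tk1, HasDerivAt x (L *ᵥ x tk) t)
    (V : ℝ → ℝ)
    (hV : V = fun t => (1/2 : ℝ) *
      ((x t - fun _ => ξ ⬝ᵥ x 0) ⬝ᵥ (Matrix.diagonal ξ *ᵥ (x t - fun _ => ξ ⬝ᵥ x 0)))) :
    ∀ a : ℝ, 0 < a → ∀ t ∈ Set.Ico tk tk1,
      ∃ v : ℝ, HasDerivAt V v t ∧
        v ≤ -(1 - a * betam / (2 * lam₂)) * (x t ⬝ᵥ ((-R) *ᵥ x t))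
            + (1 / (2 * a)) * ((x tk - x t) ⬝ᵥ (x tk - x t)) :=
  lyapunov_derivative_bound_general A D L hA_nonneg hD hL hSC ξ hξ_pos hξL R Q hR hQ lam₂ betam
    hlam₂_pos hlam₂_min hbetam_mem hbetam_max tk tk1 x hx V hV
end

section
/- Comparison of self-triggered step sizes: let L be a symmetric Laplacian with simple zero eigenvalue, σ ∈ (0,1), and x with Lx ≠ 0. Define τ¹ = σ·(xᵀL²x)/(−xᵀL³x) and let e(τ) = τLx. Then ‖e(τ¹)‖ ≥ σ‖Lx‖/‖L‖; consequently τ¹ is at least as large as any τ⁰ for which ‖e(t)‖ ≤ σ‖L x(t)‖/‖L‖ holds for all t ∈ [0, τ⁰] along x(t) = x + tLx. -/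
/-!
Write `y = L x`, `a = ‖y‖²`, `b = -yᵀ L y`, `c = ‖L y‖²` and `N = ‖L‖`, so that `τ¹ = σ a / b`.
Negative semidefiniteness gives `b > 0` (if `yᵀ L y = 0` then `L y = 0`, hence
`‖y‖² = (L y)ᵀ x = 0`), and Cauchy–Schwarz gives `b ≤ N a` and `c ≤ N² a`; the first of these is
exactly `‖e(τ¹)‖ ≥ σ ‖y‖ / N`. At `t = τ⁰` the triggering condition squares to
`(t N)² a ≤ σ² ‖y + t L y‖² = σ² (a - 2 t b + t² c)`. If `t b > σ a`, then `t N > σ` and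
`(t N)² (1 - σ²) < σ² (1 - 2σ) ≤ σ² (1 - σ²)`, contradicting `t N > σ`.
-/

open Matrix

/-- Euclidean norm of a vector. -/
noncomputable def l2norm {m : ℕ} (v : Fin m → ℝ) : ℝ := Real.sqrt (v ⬝ᵥ v)

/-- Induced 2-norm of a matrix. -/
noncomputable def l2opNorm {m : ℕ} (M : Matrix (Fin m) (Fin m) ℝ) : ℝ :=
  sSup ((fun v => l2norm (M *ᵥ v)) '' {v : Fin m → ℝ | l2norm v ≤ 1})

open WithLp

section l2norm

variable {m : ℕ}

lemma l2norm_eq_norm_toLp (v : Fin m → ℝ) : l2norm v = ‖toLp 2 v‖ := by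
  rw [norm_eq_sqrt_real_inner, EuclideanSpace.inner_toLp_toLp, star_trivial, l2norm]

lemma sq_l2norm (v : Fin m → ℝ) : l2norm v ^ 2 = v ⬝ᵥ v := by
  rw [l2norm_eq_norm_toLp, ← real_inner_self_eq_norm_sq, EuclideanSpace.inner_toLp_toLp,
    star_trivial]

lemma l2norm_nonneg (v : Fin m → ℝ) : 0 ≤ l2norm v := Real.sqrt_nonneg _

lemma l2norm_pos {v : Fin m → ℝ} (hv : v ≠ 0) : 0 < l2norm v := by
  rw [l2norm_eq_norm_toLp, norm_pos_iff]
  exact fun h => hv (by simpa using congrArg ofLp h)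

lemma l2norm_smul (s : ℝ) (v : Fin m → ℝ) : l2norm (s • v) = |s| * l2norm v := by
  rw [l2norm_eq_norm_toLp, l2norm_eq_norm_toLp, toLp_smul, norm_smul, Real.norm_eq_abs]

lemma sq_l2norm_add_smul (v w : Fin m → ℝ) (t : ℝ) :
    l2norm (v + t • w) ^ 2 = v ⬝ᵥ v + 2 * t * (v ⬝ᵥ w) + t ^ 2 * (w ⬝ᵥ w) := by
  simp only [sq_l2norm, dotProduct_add, add_dotProduct, dotProduct_smul, smul_dotProduct,
    smul_eq_mul, dotProduct_comm w v]
  ring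

lemma abs_dotProduct_le_l2norm_mul (v w : Fin m → ℝ) : |v ⬝ᵥ w| ≤ l2norm v * l2norm w := by
  rw [l2norm_eq_norm_toLp, l2norm_eq_norm_toLp, dotProduct_comm, ← star_trivial v,
    ← EuclideanSpace.inner_toLp_toLp]
  exact abs_real_inner_le_norm _ _

lemma l2opNorm_eq_norm_toEuclideanCLM (M : Matrix (Fin m) (Fin m) ℝ) :
    l2opNorm M = ‖toEuclideanCLM (n := Fin m) (𝕜 := ℝ) M‖ := by
  rw [← ContinuousLinearMap.sSup_unitClosedBall_eq_norm, l2opNorm]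
  congr 1
  ext r
  constructor
  · rintro ⟨v, hv, rfl⟩
    exact ⟨toLp 2 v, by simpa [l2norm_eq_norm_toLp] using hv, by simp [l2norm_eq_norm_toLp]⟩
  · rintro ⟨u, hu, rfl⟩
    exact ⟨ofLp u, by simpa [l2norm_eq_norm_toLp] using hu,
      by simp only [l2norm_eq_norm_toLp, ← toEuclideanCLM_toLp, toLp_ofLp]⟩

lemma l2norm_mulVec_le (M : Matrix (Fin m) (Fin m) ℝ) (v : Fin m → ℝ) :
    l2norm (M *ᵥ v) ≤ l2opNorm M * l2norm v := by
  rw [l2opNorm_eq_norm_toEuclideanCLM, l2norm_eq_norm_toLp, l2norm_eq_norm_toLp,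
    ← toEuclideanCLM_toLp]
  exact ContinuousLinearMap.le_opNorm _ _

end l2norm

section Symmetric

variable {m : ℕ} {L : Matrix (Fin m) (Fin m) ℝ}

lemma Matrix.IsSymm.dotProduct_mulVec_comm (hL : L.IsSymm) (v w : Fin m → ℝ) :
    v ⬝ᵥ L *ᵥ w = L *ᵥ v ⬝ᵥ w := by
  rw [dotProduct_mulVec, ← vecMul_transpose, hL.eq]

lemma Matrix.IsSymm.dotProduct_mul_self_mulVec (hL : L.IsSymm) (x : Fin m → ℝ) :
    x ⬝ᵥ (L * L) *ᵥ x = L *ᵥ x ⬝ᵥ L *ᵥ x := by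
  rw [← mulVec_mulVec, hL.dotProduct_mulVec_comm]

lemma Matrix.IsSymm.dotProduct_mul_mul_self_mulVec (hL : L.IsSymm) (x : Fin m → ℝ) :
    x ⬝ᵥ (L * L * L) *ᵥ x = L *ᵥ x ⬝ᵥ L *ᵥ (L *ᵥ x) := by
  rw [mul_assoc, ← mulVec_mulVec, hL.dotProduct_mulVec_comm, ← mulVec_mulVec]

lemma dotProduct_mulVec_neg_of_mem_range (hL : L.IsSymm) (hnsd : (-L).PosSemidef)
    {x : Fin m → ℝ} (hLx : L *ᵥ x ≠ 0) : L *ᵥ x ⬝ᵥ L *ᵥ (L *ᵥ x) < 0 := by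
  set y := L *ᵥ x
  have hle : y ⬝ᵥ L *ᵥ y ≤ 0 := by
    simpa [neg_mulVec] using hnsd.dotProduct_mulVec_nonneg y
  refine hle.lt_of_ne fun h0 => hLx ?_
  have hLy : L *ᵥ y = 0 := by
    simpa [neg_mulVec, h0] using (hnsd.dotProduct_mulVec_zero_iff y).mp
  have : y ⬝ᵥ y = 0 := by
    calc y ⬝ᵥ y = L *ᵥ y ⬝ᵥ x := hL.dotProduct_mulVec_comm y x
      _ = 0 := by rw [hLy, zero_dotProduct]
  exact dotProduct_self_eq_zero.mp this

end Symmetric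

lemma le_mul_div_of_sq_le_quadratic {a b c N σ t : ℝ} (ha : 0 < a) (hb : 0 < b)
    (hσ : σ ∈ Set.Ioo 0 1) (hbN : b ≤ N * a) (hc : c ≤ N ^ 2 * a) (ht : 0 ≤ t)
    (h : (t * N) ^ 2 * a ≤ σ ^ 2 * (a - 2 * t * b + t ^ 2 * c)) : t ≤ σ * a / b := by
  obtain ⟨hσ0, hσ1⟩ := hσ
  rw [le_div_iff₀ hb]
  by_contra! hlt
  have hσN : σ < t * N := by
    refine lt_of_mul_lt_mul_right ?_ ha.le
    calc σ * a < t * b := hlt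
      _ ≤ t * (N * a) := by gcongr
      _ = t * N * a := by ring
  have hgrow : (t * N) ^ 2 * a < σ ^ 2 * (a - 2 * σ * a + (t * N) ^ 2 * a) := by
    calc (t * N) ^ 2 * a ≤ σ ^ 2 * (a - 2 * t * b + t ^ 2 * c) := h
      _ ≤ σ ^ 2 * (a - 2 * t * b + t ^ 2 * (N ^ 2 * a)) := by gcongr
      _ < σ ^ 2 * (a - 2 * σ * a + (t * N) ^ 2 * a) := by
        gcongr σ ^ 2 * ?_
        linarith
  have hsq : σ ^ 2 * a * (1 - σ ^ 2) < (t * N) ^ 2 * a * (1 - σ ^ 2) := by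
    have : σ ^ 2 < (t * N) ^ 2 := by gcongr
    have : 0 < 1 - σ ^ 2 := by nlinarith
    gcongr
  nlinarith [mul_pos (mul_pos (pow_pos hσ0 3) ha) (by linarith : (0 : ℝ) < 2 - σ)]

section OperatorNorm

variable {m : ℕ} (M : Matrix (Fin m) (Fin m) ℝ)

lemma l2opNorm_pos {x : Fin m → ℝ} (hMx : M *ᵥ x ≠ 0) : 0 < l2opNorm M := by
  have hx : 0 < l2norm x := l2norm_pos fun hx => hMx (by rw [hx, mulVec_zero])
  exact pos_of_mul_pos_left ((l2norm_pos hMx).trans_le (l2norm_mulVec_le M x)) hx.le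

lemma abs_dotProduct_mulVec_le (v : Fin m → ℝ) : |v ⬝ᵥ M *ᵥ v| ≤ l2opNorm M * (v ⬝ᵥ v) :=
  calc |v ⬝ᵥ M *ᵥ v| ≤ l2norm v * l2norm (M *ᵥ v) := abs_dotProduct_le_l2norm_mul _ _
    _ ≤ l2norm v * (l2opNorm M * l2norm v) := by
      gcongr
      · exact l2norm_nonneg v
      · exact l2norm_mulVec_le M v
    _ = l2opNorm M * (v ⬝ᵥ v) := by rw [← sq_l2norm]; ring

lemma mulVec_dotProduct_mulVec_le (v : Fin m → ℝ) :
    M *ᵥ v ⬝ᵥ M *ᵥ v ≤ l2opNorm M ^ 2 * (v ⬝ᵥ v) := by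
  rw [← sq_l2norm, ← sq_l2norm, ← mul_pow]
  exact pow_le_pow_left₀ (l2norm_nonneg _) (l2norm_mulVec_le M v) 2

end OperatorNorm

theorem self_triggered_step_comparison_general
    {m : ℕ}
    (L : Matrix (Fin m) (Fin m) ℝ)
    (hsymm : L.IsSymm)
    (hnsd : (-L).PosSemidef)
    (σ : ℝ) (hσ : σ ∈ Set.Ioo (0:ℝ) 1)
    (x : Fin m → ℝ) (hLx : L *ᵥ x ≠ 0)
    (tau1 : ℝ)
    (htau1 : tau1 = σ * (x ⬝ᵥ ((L * L) *ᵥ x)) / (-(x ⬝ᵥ ((L * L * L) *ᵥ x)))) :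
    σ * l2norm (L *ᵥ x) / l2opNorm L ≤ l2norm (tau1 • (L *ᵥ x)) ∧
    ∀ tau0 : ℝ, 0 ≤ tau0 →
      (∀ s ∈ Set.Icc (0:ℝ) tau0,
        l2norm (s • (L *ᵥ x)) ≤ σ * l2norm (L *ᵥ (x + s • (L *ᵥ x))) / l2opNorm L) →
      tau0 ≤ tau1 := by
  rw [hsymm.dotProduct_mul_self_mulVec, hsymm.dotProduct_mul_mul_self_mulVec] at htau1
  set y := L *ᵥ x
  have ha : 0 < y ⬝ᵥ y := sq_l2norm y ▸ pow_pos (l2norm_pos hLx) 2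
  have hb : 0 < -(y ⬝ᵥ L *ᵥ y) := neg_pos.mpr (dotProduct_mulVec_neg_of_mem_range hsymm hnsd hLx)
  have hbN : -(y ⬝ᵥ L *ᵥ y) ≤ l2opNorm L * (y ⬝ᵥ y) :=
    (neg_le_abs _).trans (abs_dotProduct_mulVec_le L y)
  have hN : 0 < l2opNorm L := l2opNorm_pos L hLx
  have htau1_pos : 0 < tau1 := htau1 ▸ div_pos (mul_pos hσ.1 ha) hb
  refine ⟨?_, fun t ht hcond => ?_⟩
  · have : σ ≤ tau1 * l2opNorm L := by
      rw [htau1, div_mul_eq_mul_div, le_div_iff₀ hb]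
      nlinarith [hσ.1]
    rw [l2norm_smul, abs_of_pos htau1_pos, div_le_iff₀ hN]
    nlinarith [(l2norm_pos hLx).le]
  · have h := hcond t ⟨ht, le_rfl⟩
    have hLxt : L *ᵥ (x + t • y) = y + t • L *ᵥ y := by rw [mulVec_add, mulVec_smul]
    rw [l2norm_smul, abs_of_nonneg ht, hLxt, le_div_iff₀ hN] at h
    rw [htau1]
    refine le_mul_div_of_sq_le_quadratic ha hb hσ hbN (mulVec_dotProduct_mulVec_le L y) ht ?_
    have := l2norm_nonneg y
    calc (t * l2opNorm L) ^ 2 * (y ⬝ᵥ y) = (t * l2norm y * l2opNorm L) ^ 2 := by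
          rw [← sq_l2norm]; ring
      _ ≤ (σ * l2norm (y + t • L *ᵥ y)) ^ 2 := pow_le_pow_left₀ (by positivity) h 2
      _ = _ := by rw [mul_pow, sq_l2norm_add_smul]; ring

/-- Comparison of self-triggered step sizes: with
`tau1 = σ (xᵀL²x)/(-xᵀL³x)` and `e(τ) = τ L x`, one has `‖e(tau1)‖ ≥ σ‖Lx‖/‖L‖`; hence `tau1`
is at least as large as any `tau0 ≥ 0` for which `‖e(t)‖ ≤ σ‖L x(t)‖/‖L‖` holds for all
`t ∈ [0, tau0]` along `x(t) = x + t L x`. -/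
theorem self_triggered_step_comparison
    {m : ℕ} [NeZero m]
    (L : Matrix (Fin m) (Fin m) ℝ)
    (hsymm : L.IsSymm)
    (hnsd : (-L).PosSemidef)
    (hsimple : Polynomial.rootMultiplicity (0 : ℝ) L.charpoly = 1)
    (σ : ℝ) (hσ : σ ∈ Set.Ioo (0:ℝ) 1)
    (x : Fin m → ℝ) (hLx : L *ᵥ x ≠ 0)
    (tau1 : ℝ)
    (htau1 : tau1 = σ * (x ⬝ᵥ ((L * L) *ᵥ x)) / (-(x ⬝ᵥ ((L * L * L) *ᵥ x)))) :
    σ * l2norm (L *ᵥ x) / l2opNorm L ≤ l2norm (tau1 • (L *ᵥ x)) ∧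
    ∀ tau0 : ℝ, 0 ≤ tau0 →
      (∀ s ∈ Set.Icc (0:ℝ) tau0,
        l2norm (s • (L *ᵥ x)) ≤ σ * l2norm (L *ᵥ (x + s • (L *ᵥ x))) / l2opNorm L) →
      tau0 ≤ tau1 :=
  self_triggered_step_comparison_general L hsymm hnsd σ hσ x hLx tau1 htau1
end
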